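/- arXiv:2410.08963 — 11 statements merged into one kernel-verified Lean document; each statement's English description precedes it below -/
import Mathlib

section
/- Let G be a simple graph on vertex set {1,…,n} and let A and M be real symmetric n×n matrices supported on G such that for every edge {i,k} of G one has A_{ik} ≤ 0 and M_{ik} > 0. Let λ > 0 and let S be a zero forcing set of G. If u ∈ ℝⁿ satisfies Au = λMu and u_i = 0 for all i ∈ S, then u = 0. -/
/-- A subset `S` of the vertices of a simple graph `G` is a zero forcing set if
for every `T` with `S ⊆ T ⊊ V` there is a vertex `v ∈ T` having exactly one
neighbour outside `T`. -/
def ZeroForcingSet {V : Type*} (G : SimpleGraph V) (S : Set V) : Prop :=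
  ∀ T : Set V, S ⊆ T → T ≠ Set.univ → ∃ v ∈ T, ∃! w, G.Adj v w ∧ w ∉ T

/-- matrix form of Proposition 3.3. -/
theorem zero_forcing_unique_continuation {n : ℕ} (G : SimpleGraph (Fin n))
    (A M : Matrix (Fin n) (Fin n) ℝ)
    (hAsym : A.IsSymm) (hMsym : M.IsSymm)
    (hAsupp : ∀ i k, i ≠ k → ¬ G.Adj i k → A i k = 0)
    (hMsupp : ∀ i k, i ≠ k → ¬ G.Adj i k → M i k = 0)
    (hAneg : ∀ i k, G.Adj i k → A i k ≤ 0)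
    (hMpos : ∀ i k, G.Adj i k → 0 < M i k)
    (lam : ℝ) (hlam : 0 < lam)
    (S : Set (Fin n)) (hS : ZeroForcingSet G S)
    (u : Fin n → ℝ)
    (hu : A.mulVec u = lam • M.mulVec u)
    (huS : ∀ i ∈ S, u i = 0) :
    u = 0 := by
  set T : Set (Fin n) := {i | u i = 0} with hT
  have hTuniv : T = Set.univ := by
    by_contra hne
    obtain ⟨v, hvT, w, ⟨hadj, hwT⟩, huniq⟩ := hS T (fun i hi => huS i hi) hne
    have hrow : ∑ k, (A v k - lam * M v k) * u k = 0 := by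
      have h1 := congrFun hu v
      simp only [Matrix.mulVec, dotProduct, Pi.smul_apply, smul_eq_mul,
        Finset.mul_sum] at h1
      have : ∑ k, (A v k - lam * M v k) * u k
          = ∑ k, A v k * u k - ∑ k, lam * (M v k * u k) := by
        rw [← Finset.sum_sub_distrib]
        congr 1; ext k; ring
      rw [this, h1]
      simp [mul_assoc]
    rw [Finset.sum_eq_single w] at hrow
    · have hcoef : A v w - lam * M v w < 0 := by
        have := hAneg v w hadj
        have := hMpos v w hadj
        nlinarith
      have : u w = 0 := by
        rcases mul_eq_zero.mp hrow with h | h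
        · exact absurd h (ne_of_lt hcoef)
        · exact h
      exact hwT this
    · intro k _ hk
      by_cases hkT : k ∈ T
      · have : u k = 0 := hkT
        rw [this, mul_zero]
      · by_cases hadj' : G.Adj v k
        · exact absurd (huniq k ⟨hadj', hkT⟩) hk
        · have hkv : v ≠ k := by
            rintro rfl; exact hkT hvT
          rw [hAsupp v k hkv hadj', hMsupp v k hkv hadj']
          ring
    · intro h; exact absurd (Finset.mem_univ w) h
  funext i
  have : i ∈ T := hTuniv ▸ Set.mem_univ i
  exact this
end

section
/- Let G be a simple graph on vertex set {1,…,n} and let A and M be real symmetric n×n matrices supported on G such that for every edge {i,k} of G one has A_{ik} ≤ 0 and M_{ik} > 0. Let λ > 0 and let B ⊆ {1,…,n}. Then for every subset S_I ⊆ {1,…,n} such that S_I ∪ B is a zero forcing set of G, the real vector space { u ∈ ℝⁿ : Au = λMu and u_i = 0 for all i ∈ B } has dimension at most |S_I|. Equivalently, its dimension is at most Z(G;B) − |B|, where Z(G;B) = min{ |S| : S is a zero forcing set of G containing B }. -/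
/-- The space of solutions of `Au = λMu` vanishing on a set `B` of indices. -/
def solutionSpace {n : ℕ} (A M : Matrix (Fin n) (Fin n) ℝ) (lam : ℝ)
    (B : Set (Fin n)) : Submodule ℝ (Fin n → ℝ) where
  carrier := {u | A.mulVec u = lam • M.mulVec u ∧ ∀ i ∈ B, u i = 0}
  add_mem' := by
    rintro a b ⟨ha1, ha2⟩ ⟨hb1, hb2⟩
    refine ⟨?_, ?_⟩
    · simp only [Matrix.mulVec_add, ha1, hb1, smul_add]
    · intro i hi
      simp [Pi.add_apply, ha2 i hi, hb2 i hi]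
  zero_mem' := by
    refine ⟨?_, ?_⟩
    · simp
    · intro i _
      rfl
  smul_mem' := by
    rintro c a ⟨ha1, ha2⟩
    refine ⟨?_, ?_⟩
    · rw [Matrix.mulVec_smul, Matrix.mulVec_smul, ha1, smul_comm]
    · intro i hi
      simp [Pi.smul_apply, ha2 i hi]


private lemma forcing_zero {n : ℕ} (G : SimpleGraph (Fin n))
    (A M : Matrix (Fin n) (Fin n) ℝ)
    (hAsupp : ∀ i k, i ≠ k → ¬ G.Adj i k → A i k = 0)
    (hMsupp : ∀ i k, i ≠ k → ¬ G.Adj i k → M i k = 0)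
    (hAneg : ∀ i k, G.Adj i k → A i k ≤ 0)
    (hMpos : ∀ i k, G.Adj i k → 0 < M i k)
    (lam : ℝ) (hlam : 0 < lam)
    (S : Set (Fin n)) (hZF : ZeroForcingSet G S)
    (u : Fin n → ℝ) (heq : A.mulVec u = lam • M.mulVec u)
    (hS : ∀ i ∈ S, u i = 0) : u = 0 := by
  by_contra hne
  set T : Set (Fin n) := {i | u i = 0} with hTdef
  have hST : S ⊆ T := hS
  have hT : T ≠ Set.univ := by
    intro h
    apply hne
    funext i
    have : i ∈ T := h ▸ Set.mem_univ i
    exact this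
  obtain ⟨v, hvT, w, ⟨hadj, hwT⟩, huniq⟩ := hZF T hST hT
  have hv : A.mulVec u v = lam * M.mulVec u v := by
    rw [heq]; rfl
  have key : ∀ k, k ≠ w → (A v k - lam * M v k) * u k = 0 := by
    intro k hk
    by_cases hkT : k ∈ T
    · have : u k = 0 := hkT
      rw [this, mul_zero]
    · have hkv : k ≠ v := by
        intro h; exact hkT (h ▸ hvT)
      have hnadj : ¬ G.Adj v k := by
        intro hadj'
        exact hk (huniq k ⟨hadj', hkT⟩)
      rw [hAsupp v k (Ne.symm hkv) hnadj, hMsupp v k (Ne.symm hkv) hnadj]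
      ring
  have hsum : ∑ k, (A v k - lam * M v k) * u k = 0 := by
    have h1 : ∑ k, (A v k - lam * M v k) * u k
        = A.mulVec u v - lam * M.mulVec u v := by
      simp [Matrix.mulVec, dotProduct, sub_mul, Finset.sum_sub_distrib,
        Finset.mul_sum, mul_assoc]
    rw [h1, hv, sub_self]
  have hw0 : (A v w - lam * M v w) * u w = 0 := by
    rw [← hsum]
    exact (Finset.sum_eq_single_of_mem w (Finset.mem_univ w)
      (fun k _ hk => key k hk)).symm
  have hcoef : A v w - lam * M v w < 0 := by
    have h1 := hAneg v w hadj
    have h2 := hMpos v w hadj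
    nlinarith
  have : u w = 0 := by
    rcases mul_eq_zero.mp hw0 with h | h
    · exact absurd h hcoef.ne
    · exact h
  exact hwT this

/-- matrix form of Theorem 3.4, bounding the dimension of the
space of inner solutions by the restricted zero forcing number. -/
theorem dim_inner_solutions_le {n : ℕ} (G : SimpleGraph (Fin n))
    (A M : Matrix (Fin n) (Fin n) ℝ)
    (hAsym : A.IsSymm) (hMsym : M.IsSymm)
    (hAsupp : ∀ i k, i ≠ k → ¬ G.Adj i k → A i k = 0)
    (hMsupp : ∀ i k, i ≠ k → ¬ G.Adj i k → M i k = 0)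
    (hAneg : ∀ i k, G.Adj i k → A i k ≤ 0)
    (hMpos : ∀ i k, G.Adj i k → 0 < M i k)
    (lam : ℝ) (hlam : 0 < lam)
    (B : Finset (Fin n)) :
    (∀ S_I : Finset (Fin n), ZeroForcingSet G (↑S_I ∪ ↑B) →
        Module.finrank ℝ (solutionSpace A M lam ↑B) ≤ S_I.card) ∧
      Module.finrank ℝ (solutionSpace A M lam ↑B) ≤
        sInf {k : ℕ | ∃ S : Finset (Fin n),
          B ⊆ S ∧ ZeroForcingSet G ↑S ∧ S.card = k} - B.card := by
  have main : ∀ S_I : Finset (Fin n), ZeroForcingSet G (↑S_I ∪ ↑B) →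
      Module.finrank ℝ (solutionSpace A M lam ↑B) ≤ S_I.card := by
    intro S_I hZF
    let π : (solutionSpace A M lam ↑B) →ₗ[ℝ] (↥S_I → ℝ) :=
      { toFun := fun u i => (u : Fin n → ℝ) i.1
        map_add' := fun a b => rfl
        map_smul' := fun c a => rfl }
    have hinj : Function.Injective π := by
      rw [← LinearMap.ker_eq_bot, LinearMap.ker_eq_bot']
      intro u hu
      have hz : (u : Fin n → ℝ) = 0 := by
        apply forcing_zero G A M hAsupp hMsupp hAneg hMpos lam hlam _ hZF _ u.2.1
        intro i hi
        rcases hi with hi | hi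
        · exact congrFun hu ⟨i, hi⟩
        · exact u.2.2 i hi
      exact Subtype.ext hz
    calc Module.finrank ℝ (solutionSpace A M lam ↑B)
        ≤ Module.finrank ℝ (↥S_I → ℝ) :=
          LinearMap.finrank_le_finrank_of_injective hinj
      _ = S_I.card := by
          rw [Module.finrank_fintype_fun_eq_card, Fintype.card_coe]
  refine ⟨main, ?_⟩
  have hunivZF : ZeroForcingSet G (↑(Finset.univ : Finset (Fin n))) := by
    intro T hT hTne
    exact absurd (Set.univ_subset_iff.mp (by simpa using hT)) hTne
  have hne : {k : ℕ | ∃ S : Finset (Fin n),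
      B ⊆ S ∧ ZeroForcingSet G ↑S ∧ S.card = k}.Nonempty :=
    ⟨(Finset.univ : Finset (Fin n)).card, Finset.univ, Finset.subset_univ _,
      hunivZF, rfl⟩
  obtain ⟨S, hBS, hZF, hcard⟩ := Nat.sInf_mem hne
  have hunion : (↑(S \ B) : Set (Fin n)) ∪ ↑B = ↑S := by
    rw [Finset.coe_sdiff]
    exact Set.diff_union_of_subset (Finset.coe_subset.mpr hBS)
  have := main (S \ B) (hunion ▸ hZF)
  rw [Finset.card_sdiff_of_subset hBS, hcard] at this
  exact this
end

section
/- Let n, m ≥ 1 and let V = {0,…,n} × {0,…,m}. Let C be a real matrix with rows and columns indexed by V such that: (i) C_{pq} = 0 whenever p ≠ q and it is not the case that |p₁ − q₁| ≤ 1 and |p₂ − q₂| ≤ 1; and (ii) C_{pq} ≠ 0 whenever |p₁ − q₁| = 1 and |p₂ − q₂| = 1. If u ∈ ℝ^V satisfies Cu = 0 and u_p = 0 for every p ∈ V with p₁ = 0 or p₂ = 0, then u = 0. -/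
/-- the linear-algebraic core of Theorem 3.5.  A matrix supported
on the king graph of a grid, with nonzero diagonal connections, admits no
nonzero kernel vector vanishing on the bottom row and left column. -/
theorem grid_unique_continuation {n m : ℕ} (hn : 1 ≤ n) (hm : 1 ≤ m)
    (C : Matrix (Fin (n + 1) × Fin (m + 1)) (Fin (n + 1) × Fin (m + 1)) ℝ)
    (hsupp : ∀ p q : Fin (n + 1) × Fin (m + 1), p ≠ q →
      ¬ (|(p.1 : ℤ) - (q.1 : ℤ)| ≤ 1 ∧ |(p.2 : ℤ) - (q.2 : ℤ)| ≤ 1) → C p q = 0)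
    (hdiag : ∀ p q : Fin (n + 1) × Fin (m + 1),
      |(p.1 : ℤ) - (q.1 : ℤ)| = 1 → |(p.2 : ℤ) - (q.2 : ℤ)| = 1 → C p q ≠ 0)
    (u : Fin (n + 1) × Fin (m + 1) → ℝ)
    (hu : C.mulVec u = 0)
    (hbd : ∀ p : Fin (n + 1) × Fin (m + 1), p.1 = 0 ∨ p.2 = 0 → u p = 0) :
    u = 0 := by
  have key : ∀ i : ℕ, ∀ q : Fin (n + 1) × Fin (m + 1), (q.1 : ℕ) ≤ i → u q = 0 := by
    intro i
    induction i with
    | zero =>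
      intro q hq
      exact hbd q (Or.inl (Fin.ext (Nat.le_zero.mp hq)))
    | succ i IH =>
      -- inner induction on the second coordinate
      have inner : ∀ j : ℕ, ∀ q : Fin (n + 1) × Fin (m + 1),
          (q.1 : ℕ) = i + 1 → (q.2 : ℕ) ≤ j → u q = 0 := by
        intro j
        induction j with
        | zero =>
          intro q _ hq2
          exact hbd q (Or.inr (Fin.ext (Nat.le_zero.mp hq2)))
        | succ j IH2 =>
          intro q hq1 hq2
          by_cases hle : (q.2 : ℕ) ≤ j
          · exact IH2 q hq1 hle
          have hq2' : (q.2 : ℕ) = j + 1 := by omega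
          have hi : i < n + 1 := by have := q.1.isLt; omega
          have hj : j < m + 1 := by have := q.2.isLt; omega
          set p : Fin (n + 1) × Fin (m + 1) := (⟨i, hi⟩, ⟨j, hj⟩) with hp
          have h0 : C.mulVec u p = 0 := congrFun hu p
          have hsum : ∑ r, C p r * u r = 0 := h0
          have hsingle : ∑ r, C p r * u r = C p q * u q := by
            apply Finset.sum_eq_single_of_mem q (Finset.mem_univ q)
            intro r _ hr
            by_cases hk : |(p.1 : ℤ) - (r.1 : ℤ)| ≤ 1 ∧ |(p.2 : ℤ) - (r.2 : ℤ)| ≤ 1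
            · -- r is a king-neighbor (or p itself); show u r = 0
              have hur : u r = 0 := by
                have hp1 : (p.1 : ℤ) = (i : ℤ) := rfl
                have hp2 : (p.2 : ℤ) = (j : ℤ) := rfl
                by_cases h1 : (r.1 : ℕ) ≤ i
                · exact IH r h1
                · have hr1 : (r.1 : ℕ) = i + 1 := by
                    have := hk.1
                    rw [hp1, abs_le] at this
                    omega
                  by_cases h2 : (r.2 : ℕ) ≤ j
                  · exact IH2 r hr1 h2
                  · have hr2 : (r.2 : ℕ) = j + 1 := by
                      have := hk.2
                      rw [hp2, abs_le] at this
                      omega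
                    exact absurd (Prod.ext (Fin.ext (by omega : (r.1 : ℕ) = (q.1 : ℕ)))
                      (Fin.ext (by omega : (r.2 : ℕ) = (q.2 : ℕ)))) hr
              rw [hur, mul_zero]
            · have hpr : p ≠ r := by
                intro h; subst h
                exact hk ⟨by simp, by simp⟩
              rw [hsupp p r hpr hk, zero_mul]
          have hCpq : C p q ≠ 0 := by
            apply hdiag
            · show |((i : ℤ)) - (q.1 : ℤ)| = 1
              rw [abs_eq (by norm_num : (0:ℤ) ≤ 1)]
              omega
            · show |((j : ℤ)) - (q.2 : ℤ)| = 1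
              rw [abs_eq (by norm_num : (0:ℤ) ≤ 1)]
              omega
          have : C p q * u q = 0 := by rw [← hsingle]; exact hsum
          exact (mul_eq_zero.mp this).resolve_left hCpq
      intro q hq
      by_cases h : (q.1 : ℕ) ≤ i
      · exact IH q h
      · exact inner m q (by omega) (by have := q.2.isLt; omega)
  funext q
  exact key n q (by have := q.1.isLt; omega)
end

section
/- Let C be a real symmetric 13×13 matrix, with indices interpreted as follows: index 1 is the centre, indices 2–7 form the inner ring with cyclic successor σ (σ(j) = j+1 for 2 ≤ j ≤ 6, σ(7) = 2), and indices 8–13 are the boundary, where node 8 is adjacent to inner nodes 7 and 2, and nodes 9, 10, 11, 12, 13 are adjacent to the inner pairs (2,3), (3,4), (4,5), (5,6), (6,7) respectively. Assume the following support conditions on the first seven columns: for each inner index i ∈ {2,…,7}, C_{ij} = 0 for every j ∈ {2,…,7} with j ∉ {i, σ(i), σ⁻¹(i)}; for each boundary index b ∈ {8,…,13}, C_{b1} = 0 and C_{bj} = 0 for every inner index j ∈ {2,…,7} that is not one of the two inner neighbours of b. Assume the symmetry conditions: C_{12} = C_{13} = C_{14} = C_{15} = C_{16} = C_{17} and C_{21}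 ≠ 0; C_{22} = C_{33} = C_{44} = C_{55} = C_{66} = C_{77}; C_{23} = C_{34} = C_{45} = C_{56} = C_{67} = C_{72}; and C_{87} = C_{82} ≠ 0, C_{92} = C_{93} ≠ 0, C_{10,3} = C_{10,4} ≠ 0, C_{11,4} = C_{11,5} ≠ 0, C_{12,5} = C_{12,6} ≠ 0, C_{13,6} = C_{13,7} ≠ 0. Then the space { w ∈ ℝ⁷ : C·(w₁,…,w₇,0,0,0,0,0,0) = 0 ∈ ℝ¹³ } is spanned by (0, 1, −1, 1, −1, 1, −1) if C_{22} = 2C_{23}, and is the zero space otherwise. -/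
/-- Extension of a vector on the seven interior nodes (centre `0` and inner
ring `1,…,6`) by zero on the six boundary nodes `7,…,12`. -/
def extendByZero (w : Fin 7 → ℝ) : Fin 13 → ℝ :=
  fun i => if h : (i : ℕ) < 7 then w ⟨i, h⟩ else 0

private lemma mulVec_ext (C : Matrix (Fin 13) (Fin 13) ℝ) (w : Fin 7 → ℝ) (i : Fin 13) :
    C.mulVec (extendByZero w) i =
      C i 0 * w 0 + C i 1 * w 1 + C i 2 * w 2 + C i 3 * w 3 +
      C i 4 * w 4 + C i 5 * w 5 + C i 6 * w 6 := by
  simp [Matrix.mulVec, dotProduct, Fin.sum_univ_succ, extendByZero,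
    show (Fin.succ 2 : Fin 13) = 3 from rfl,
    show ((Fin.succ 2).succ : Fin 13) = 4 from rfl,
    show ((Fin.succ 2).succ.succ : Fin 13) = 5 from rfl,
    show ((Fin.succ 2).succ.succ.succ : Fin 13) = 6 from rfl]
  ring

/-- STATEMENT 6 (Theorem 4.1, linear-algebraic form), with 0-based indices:
`0` is the centre, `1,…,6` the inner ring (ring successor `1→2→⋯→6→1`), and
`7,…,12` the boundary, where boundary node `6+k` is adjacent to inner nodes
`k-1` and `k` cyclically; explicitly `7 ↔ {6,1}`, `8 ↔ {1,2}`, `9 ↔ {2,3}`,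
`10 ↔ {3,4}`, `11 ↔ {4,5}`, `12 ↔ {5,6}`. -/
theorem hexagon_inner_solutions (C : Matrix (Fin 13) (Fin 13) ℝ)
    (hsym : C.IsSymm)
    -- support conditions: inner rows vanish at non-adjacent inner columns
    (hin : ∀ i j : Fin 13, 1 ≤ (i : ℕ) → (i : ℕ) ≤ 6 → 1 ≤ (j : ℕ) → (j : ℕ) ≤ 6 →
      j ≠ i → (i : ℕ) % 6 + 1 ≠ (j : ℕ) → (j : ℕ) % 6 + 1 ≠ (i : ℕ) → C i j = 0)
    -- support conditions: boundary rows vanish at the centre and at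
    -- non-adjacent inner columns
    (hb7 : ∀ j : Fin 13, (j : ℕ) ≤ 6 → j ≠ 6 → j ≠ 1 → C 7 j = 0)
    (hb8 : ∀ j : Fin 13, (j : ℕ) ≤ 6 → j ≠ 1 → j ≠ 2 → C 8 j = 0)
    (hb9 : ∀ j : Fin 13, (j : ℕ) ≤ 6 → j ≠ 2 → j ≠ 3 → C 9 j = 0)
    (hb10 : ∀ j : Fin 13, (j : ℕ) ≤ 6 → j ≠ 3 → j ≠ 4 → C 10 j = 0)
    (hb11 : ∀ j : Fin 13, (j : ℕ) ≤ 6 → j ≠ 4 → j ≠ 5 → C 11 j = 0)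
    (hb12 : ∀ j : Fin 13, (j : ℕ) ≤ 6 → j ≠ 5 → j ≠ 6 → C 12 j = 0)
    -- symmetry conditions
    (hc1 : C 0 1 = C 0 2 ∧ C 0 1 = C 0 3 ∧ C 0 1 = C 0 4 ∧ C 0 1 = C 0 5 ∧
      C 0 1 = C 0 6)
    (hc2 : C 1 0 ≠ 0)
    (hdiag : C 1 1 = C 2 2 ∧ C 1 1 = C 3 3 ∧ C 1 1 = C 4 4 ∧ C 1 1 = C 5 5 ∧
      C 1 1 = C 6 6)
    (hoff : C 1 2 = C 2 3 ∧ C 1 2 = C 3 4 ∧ C 1 2 = C 4 5 ∧ C 1 2 = C 5 6 ∧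
      C 1 2 = C 6 1)
    (he7 : C 7 6 = C 7 1 ∧ C 7 1 ≠ 0)
    (he8 : C 8 1 = C 8 2 ∧ C 8 1 ≠ 0)
    (he9 : C 9 2 = C 9 3 ∧ C 9 2 ≠ 0)
    (he10 : C 10 3 = C 10 4 ∧ C 10 3 ≠ 0)
    (he11 : C 11 4 = C 11 5 ∧ C 11 4 ≠ 0)
    (he12 : C 12 5 = C 12 6 ∧ C 12 5 ≠ 0) :
    (C 1 1 = 2 * C 1 2 →
      {w : Fin 7 → ℝ | C.mulVec (extendByZero w) = 0} =
        ↑(Submodule.span ℝ ({![0, 1, -1, 1, -1, 1, -1]} : Set (Fin 7 → ℝ)))) ∧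
    (C 1 1 ≠ 2 * C 1 2 →
      {w : Fin 7 → ℝ | C.mulVec (extendByZero w) = 0} = {0}) := by
  obtain ⟨h12, h13, h14, h15, h16⟩ := hc1
  obtain ⟨d2, d3, d4, d5, d6⟩ := hdiag
  obtain ⟨o23, o34, o45, o56, o61⟩ := hoff
  -- zero entries among inner rows
  have z13 : C 1 3 = 0 := hin 1 3 (by decide) (by decide) (by decide) (by decide) (by decide) (by decide) (by decide)
  have z14 : C 1 4 = 0 := hin 1 4 (by decide) (by decide) (by decide) (by decide) (by decide) (by decide) (by decide)
  have z15 : C 1 5 = 0 := hin 1 5 (by decide) (by decide) (by decide) (by decide) (by decide) (by decide) (by decide)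
  have z24 : C 2 4 = 0 := hin 2 4 (by decide) (by decide) (by decide) (by decide) (by decide) (by decide) (by decide)
  have z25 : C 2 5 = 0 := hin 2 5 (by decide) (by decide) (by decide) (by decide) (by decide) (by decide) (by decide)
  have z26 : C 2 6 = 0 := hin 2 6 (by decide) (by decide) (by decide) (by decide) (by decide) (by decide) (by decide)
  have z31 : C 3 1 = 0 := hin 3 1 (by decide) (by decide) (by decide) (by decide) (by decide) (by decide) (by decide)
  have z35 : C 3 5 = 0 := hin 3 5 (by decide) (by decide) (by decide) (by decide) (by decide) (by decide) (by decide)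
  have z36 : C 3 6 = 0 := hin 3 6 (by decide) (by decide) (by decide) (by decide) (by decide) (by decide) (by decide)
  have z41 : C 4 1 = 0 := hin 4 1 (by decide) (by decide) (by decide) (by decide) (by decide) (by decide) (by decide)
  have z42 : C 4 2 = 0 := hin 4 2 (by decide) (by decide) (by decide) (by decide) (by decide) (by decide) (by decide)
  have z46 : C 4 6 = 0 := hin 4 6 (by decide) (by decide) (by decide) (by decide) (by decide) (by decide) (by decide)
  have z51 : C 5 1 = 0 := hin 5 1 (by decide) (by decide) (by decide) (by decide) (by decide) (by decide) (by decide)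
  have z52 : C 5 2 = 0 := hin 5 2 (by decide) (by decide) (by decide) (by decide) (by decide) (by decide) (by decide)
  have z53 : C 5 3 = 0 := hin 5 3 (by decide) (by decide) (by decide) (by decide) (by decide) (by decide) (by decide)
  have z62 : C 6 2 = 0 := hin 6 2 (by decide) (by decide) (by decide) (by decide) (by decide) (by decide) (by decide)
  have z63 : C 6 3 = 0 := hin 6 3 (by decide) (by decide) (by decide) (by decide) (by decide) (by decide) (by decide)
  have z64 : C 6 4 = 0 := hin 6 4 (by decide) (by decide) (by decide) (by decide) (by decide) (by decide) (by decide)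
  -- symmetric rewritings
  have e16 : C 1 6 = C 1 2 := (hsym.apply 6 1).trans o61.symm
  have e20 : C 2 0 = C 1 0 := ((hsym.apply 0 2).trans h12.symm).trans (hsym.apply 1 0)
  have e21 : C 2 1 = C 1 2 := hsym.apply 1 2
  have e22 : C 2 2 = C 1 1 := d2.symm
  have e23 : C 2 3 = C 1 2 := o23.symm
  have e30 : C 3 0 = C 1 0 := ((hsym.apply 0 3).trans h13.symm).trans (hsym.apply 1 0)
  have e32 : C 3 2 = C 1 2 := (hsym.apply 2 3).trans o23.symm
  have e33 : C 3 3 = C 1 1 := d3.symm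
  have e34 : C 3 4 = C 1 2 := o34.symm
  have e40 : C 4 0 = C 1 0 := ((hsym.apply 0 4).trans h14.symm).trans (hsym.apply 1 0)
  have e43 : C 4 3 = C 1 2 := (hsym.apply 3 4).trans o34.symm
  have e44 : C 4 4 = C 1 1 := d4.symm
  have e45 : C 4 5 = C 1 2 := o45.symm
  have e50 : C 5 0 = C 1 0 := ((hsym.apply 0 5).trans h15.symm).trans (hsym.apply 1 0)
  have e54 : C 5 4 = C 1 2 := (hsym.apply 4 5).trans o45.symm
  have e55 : C 5 5 = C 1 1 := d5.symm
  have e56 : C 5 6 = C 1 2 := o56.symm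
  have e60 : C 6 0 = C 1 0 := ((hsym.apply 0 6).trans h16.symm).trans (hsym.apply 1 0)
  have e61 : C 6 1 = C 1 2 := o61.symm
  have e65 : C 6 5 = C 1 2 := (hsym.apply 5 6).trans o56.symm
  have e66 : C 6 6 = C 1 1 := d6.symm
  have e10 : C 1 0 = C 0 1 := hsym.apply 0 1
  -- boundary zero entries at interior columns
  have b70 : C 7 0 = 0 := hb7 0 (by decide) (by decide) (by decide)
  have b72 : C 7 2 = 0 := hb7 2 (by decide) (by decide) (by decide)
  have b73 : C 7 3 = 0 := hb7 3 (by decide) (by decide) (by decide)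
  have b74 : C 7 4 = 0 := hb7 4 (by decide) (by decide) (by decide)
  have b75 : C 7 5 = 0 := hb7 5 (by decide) (by decide) (by decide)
  have b80 : C 8 0 = 0 := hb8 0 (by decide) (by decide) (by decide)
  have b83 : C 8 3 = 0 := hb8 3 (by decide) (by decide) (by decide)
  have b84 : C 8 4 = 0 := hb8 4 (by decide) (by decide) (by decide)
  have b85 : C 8 5 = 0 := hb8 5 (by decide) (by decide) (by decide)
  have b86 : C 8 6 = 0 := hb8 6 (by decide) (by decide) (by decide)
  have b90 : C 9 0 = 0 := hb9 0 (by decide) (by decide) (by decide)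
  have b91 : C 9 1 = 0 := hb9 1 (by decide) (by decide) (by decide)
  have b94 : C 9 4 = 0 := hb9 4 (by decide) (by decide) (by decide)
  have b95 : C 9 5 = 0 := hb9 5 (by decide) (by decide) (by decide)
  have b96 : C 9 6 = 0 := hb9 6 (by decide) (by decide) (by decide)
  have c00 : C 10 0 = 0 := hb10 0 (by decide) (by decide) (by decide)
  have c01 : C 10 1 = 0 := hb10 1 (by decide) (by decide) (by decide)
  have c02 : C 10 2 = 0 := hb10 2 (by decide) (by decide) (by decide)
  have c05 : C 10 5 = 0 := hb10 5 (by decide) (by decide) (by decide)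
  have c06 : C 10 6 = 0 := hb10 6 (by decide) (by decide) (by decide)
  have c10 : C 11 0 = 0 := hb11 0 (by decide) (by decide) (by decide)
  have c11 : C 11 1 = 0 := hb11 1 (by decide) (by decide) (by decide)
  have c12 : C 11 2 = 0 := hb11 2 (by decide) (by decide) (by decide)
  have c13 : C 11 3 = 0 := hb11 3 (by decide) (by decide) (by decide)
  have c16 : C 11 6 = 0 := hb11 6 (by decide) (by decide) (by decide)
  have c20 : C 12 0 = 0 := hb12 0 (by decide) (by decide) (by decide)
  have c21 : C 12 1 = 0 := hb12 1 (by decide) (by decide) (by decide)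
  have c22 : C 12 2 = 0 := hb12 2 (by decide) (by decide) (by decide)
  have c23 : C 12 3 = 0 := hb12 3 (by decide) (by decide) (by decide)
  have c24 : C 12 4 = 0 := hb12 4 (by decide) (by decide) (by decide)
  -- key characterization
  have key : ∀ w : Fin 7 → ℝ, C.mulVec (extendByZero w) = 0 ↔
      (w 0 = 0 ∧ w 2 = -w 1 ∧ w 3 = w 1 ∧ w 4 = -w 1 ∧ w 5 = w 1 ∧ w 6 = -w 1 ∧
        (C 1 1 - 2 * C 1 2) * w 1 = 0) := by
    intro w
    constructor
    · intro hw
      have E : ∀ i : Fin 13, C i 0 * w 0 + C i 1 * w 1 + C i 2 * w 2 + C i 3 * w 3 +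
          C i 4 * w 4 + C i 5 * w 5 + C i 6 * w 6 = 0 := fun i => by
        have := congrFun hw i
        rwa [mulVec_ext, Pi.zero_apply] at this
      have E8 := E 8
      rw [b80, b83, b84, b85, b86] at E8
      have hw2 : w 2 = -w 1 := by
        rcases mul_eq_zero.mp (show C 8 1 * (w 1 + w 2) = 0 by
          linear_combination E8 + w 2 * he8.1) with h | h
        · exact absurd h he8.2
        · linarith
      have E9 := E 9
      rw [b90, b91, b94, b95, b96] at E9
      have hw3 : w 3 = w 1 := by
        rcases mul_eq_zero.mp (show C 9 2 * (w 2 + w 3) = 0 by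
          linear_combination E9 + w 3 * he9.1) with h | h
        · exact absurd h he9.2
        · linarith
      have E10 := E 10
      rw [c00, c01, c02, c05, c06] at E10
      have hw4 : w 4 = -w 1 := by
        rcases mul_eq_zero.mp (show C 10 3 * (w 3 + w 4) = 0 by
          linear_combination E10 + w 4 * he10.1) with h | h
        · exact absurd h he10.2
        · linarith
      have E11 := E 11
      rw [c10, c11, c12, c13, c16] at E11
      have hw5 : w 5 = w 1 := by
        rcases mul_eq_zero.mp (show C 11 4 * (w 4 + w 5) = 0 by
          linear_combination E11 + w 5 * he11.1) with h | h
        · exact absurd h he11.2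
        · linarith
      have E7 := E 7
      rw [b70, b72, b73, b74, b75] at E7
      have hw6 : w 6 = -w 1 := by
        rcases mul_eq_zero.mp (show C 7 1 * (w 1 + w 6) = 0 by
          linear_combination E7 - w 6 * he7.1) with h | h
        · exact absurd h he7.2
        · linarith
      have E1 := E 1
      rw [z13, z14, z15, e16, hw2, hw6] at E1
      have E2 := E 2
      rw [z24, z25, z26, e20, e21, e22, e23, hw2, hw3] at E2
      have hw0 : w 0 = 0 := by
        rcases mul_eq_zero.mp (show C 1 0 * w 0 = 0 by linear_combination (E1 + E2) / 2) with h | h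
        · exact absurd h hc2
        · exact h
      have hk : (C 1 1 - 2 * C 1 2) * w 1 = 0 := by
        linear_combination E1 - C 1 0 * hw0
      exact ⟨hw0, hw2, hw3, hw4, hw5, hw6, hk⟩
    · rintro ⟨hw0, hw2, hw3, hw4, hw5, hw6, hk⟩
      have g0 : C.mulVec (extendByZero w) 0 = 0 := by
        rw [mulVec_ext, ← h12, ← h13, ← h14, ← h15, ← h16, hw0, hw2, hw3, hw4, hw5, hw6]
        ring
      have g1 : C.mulVec (extendByZero w) 1 = 0 := by
        rw [mulVec_ext, z13, z14, z15, e16, hw0, hw2, hw6]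
        linear_combination hk
      have g2 : C.mulVec (extendByZero w) 2 = 0 := by
        rw [mulVec_ext, z24, z25, z26, e20, e21, e22, e23, hw0, hw2, hw3]
        linear_combination -hk
      have g3 : C.mulVec (extendByZero w) 3 = 0 := by
        rw [mulVec_ext, z31, z35, z36, e30, e32, e33, e34, hw0, hw2, hw3, hw4]
        linear_combination hk
      have g4 : C.mulVec (extendByZero w) 4 = 0 := by
        rw [mulVec_ext, z41, z42, z46, e40, e43, e44, e45, hw0, hw3, hw4, hw5]
        linear_combination -hk
      have g5 : C.mulVec (extendByZero w) 5 = 0 := by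
        rw [mulVec_ext, z51, z52, z53, e50, e54, e55, e56, hw0, hw4, hw5, hw6]
        linear_combination hk
      have g6 : C.mulVec (extendByZero w) 6 = 0 := by
        rw [mulVec_ext, z62, z63, z64, e60, e61, e65, e66, hw0, hw5, hw6]
        linear_combination -hk
      have g7 : C.mulVec (extendByZero w) 7 = 0 := by
        rw [mulVec_ext, b70, b72, b73, b74, b75, he7.1, hw6]
        ring
      have g8 : C.mulVec (extendByZero w) 8 = 0 := by
        rw [mulVec_ext, b80, b83, b84, b85, b86, ← he8.1, hw2]
        ring
      have g9 : C.mulVec (extendByZero w) 9 = 0 := by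
        rw [mulVec_ext, b90, b91, b94, b95, b96, ← he9.1, hw2, hw3]
        ring
      have g10 : C.mulVec (extendByZero w) 10 = 0 := by
        rw [mulVec_ext, c00, c01, c02, c05, c06, ← he10.1, hw3, hw4]
        ring
      have g11 : C.mulVec (extendByZero w) 11 = 0 := by
        rw [mulVec_ext, c10, c11, c12, c13, c16, ← he11.1, hw4, hw5]
        ring
      have g12 : C.mulVec (extendByZero w) 12 = 0 := by
        rw [mulVec_ext, c20, c21, c22, c23, c24, ← he12.1, hw5, hw6]
        ring
      funext i
      fin_cases i <;> assumption
  constructor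
  · intro hC
    ext w
    simp only [Set.mem_setOf_eq, SetLike.mem_coe, Submodule.mem_span_singleton]
    constructor
    · intro hw
      obtain ⟨hw0, hw2, hw3, hw4, hw5, hw6, hk⟩ := (key w).mp hw
      refine ⟨w 1, funext fun i => ?_⟩
      fin_cases i
      · exact (by rw [hw0]; ring : w 1 * 0 = w 0)
      · exact (by ring : w 1 * 1 = w 1)
      · exact (by rw [hw2]; ring : w 1 * (-1) = w 2)
      · exact (by rw [hw3]; ring : w 1 * 1 = w 3)
      · exact (by rw [hw4]; ring : w 1 * (-1) = w 4)
      · exact (by rw [hw5]; ring : w 1 * 1 = w 5)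
      · exact (by rw [hw6]; ring : w 1 * (-1) = w 6)
    · rintro ⟨a, ha⟩
      apply (key w).mpr
      have q0 : a * 0 = w 0 := congrFun ha 0
      have q1 : a * 1 = w 1 := congrFun ha 1
      have q2 : a * (-1) = w 2 := congrFun ha 2
      have q3 : a * 1 = w 3 := congrFun ha 3
      have q4 : a * (-1) = w 4 := congrFun ha 4
      have q5 : a * 1 = w 5 := congrFun ha 5
      have q6 : a * (-1) = w 6 := congrFun ha 6
      refine ⟨by linear_combination -q0, by linear_combination -q2 - q1,
        by linear_combination q1 - q3, by linear_combination -q4 - q1,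
        by linear_combination q1 - q5, by linear_combination -q6 - q1,
        by rw [hC]; ring⟩
  · intro hC
    ext w
    simp only [Set.mem_setOf_eq, Set.mem_singleton_iff]
    constructor
    · intro hw
      obtain ⟨hw0, hw2, hw3, hw4, hw5, hw6, hk⟩ := (key w).mp hw
      have h1 : w 1 = 0 := by
        rcases mul_eq_zero.mp hk with h | h
        · exact absurd (by linarith : C 1 1 = 2 * C 1 2) hC
        · exact h
      funext i
      simp only [Pi.zero_apply]
      fin_cases i
      · exact hw0
      · exact h1
      · exact hw2.trans (by rw [h1]; ring)
      · exact hw3.trans h1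
      · exact hw4.trans (by rw [h1]; ring)
      · exact hw5.trans h1
      · exact hw6.trans (by rw [h1]; ring)
    · rintro rfl
      apply (key 0).mpr
      norm_num
end

section
/- Let C be a real 15×15 matrix with indices interpreted as follows: index 1 is the centre, indices 2–8 form the inner ring with cyclic successor σ (σ(j) = j+1 for 2 ≤ j ≤ 7, σ(8) = 2), and indices 9–15 are the boundary. Assume that for each k ∈ {1,…,7}: C_{8+k, j} = 0 for every j ∈ {1,…,8} with j ∉ {k+1, σ(k+1)}, and C_{8+k, k+1} < 0 and C_{8+k, σ(k+1)} < 0. Assume also C_{21} ≠ 0. Then any u ∈ ℝ¹⁵ with Cu = 0 and u_9 = u_{10} = … = u_{15} = 0 satisfies u = 0. -/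
/-- The inner-ring nodes of the heptagon mesh, 0-based: `hepInner k = k + 1`
for `k : Fin 7` (paper indices 2,…,8). -/
def hepInner (k : Fin 7) : Fin 15 := ⟨k.1 + 1, by have := k.2; omega⟩

/-- The boundary nodes of the heptagon mesh, 0-based: `hepBnd k = k + 8`
for `k : Fin 7` (paper indices 9,…,15). -/
def hepBnd (k : Fin 7) : Fin 15 := ⟨k.1 + 8, by have := k.2; omega⟩

private lemma hep_pos_step {a b x y : ℝ} (ha : a < 0) (hb : b < 0)
    (h : a * x + b * y = 0) (hx : 0 < x) : y < 0 := by nlinarith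

private lemma hep_neg_step {a b x y : ℝ} (ha : a < 0) (hb : b < 0)
    (h : a * x + b * y = 0) (hx : x < 0) : 0 < y := by nlinarith

private lemma hep_zero_step {a b x y : ℝ} (hb : b < 0)
    (h : a * x + b * y = 0) (hx : x = 0) : y = 0 := by
  subst hx
  have : b * y = 0 := by linarith
  rcases mul_eq_zero.1 this with h' | h'
  · exact absurd h' (ne_of_lt hb)
  · exact h'

/-- STATEMENT 7 (Section 4.3, heptagon mesh), with 0-based indices: `0` is the
centre, `1,…,7` the inner ring with cyclic successor, `8,…,14` the boundary;
boundary node `hepBnd k` is adjacent exactly to the inner nodes `hepInner k`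
and `hepInner (k+1)`, with strictly negative couplings, and vanishes on all
other interior columns.  Then any kernel vector vanishing on the boundary is
identically zero. -/
theorem heptagon_unique_continuation (C : Matrix (Fin 15) (Fin 15) ℝ)
    (hsupp : ∀ k : Fin 7, ∀ j : Fin 15, (j : ℕ) ≤ 7 →
      j ≠ hepInner k → j ≠ hepInner (k + 1) → C (hepBnd k) j = 0)
    (hneg : ∀ k : Fin 7,
      C (hepBnd k) (hepInner k) < 0 ∧ C (hepBnd k) (hepInner (k + 1)) < 0)
    (hcentre : C 1 0 ≠ 0)
    (u : Fin 15 → ℝ)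
    (hu : C.mulVec u = 0)
    (hbd : ∀ j : Fin 15, 8 ≤ (j : ℕ) → u j = 0) :
    u = 0 := by
  -- the key relations on boundary rows
  have hne : ∀ k : Fin 7, hepInner k ≠ hepInner (k + 1) := by
    intro k heq
    have h := congrArg Fin.val heq
    simp only [hepInner, Fin.add_def, Fin.val_one] at h
    have := k.2
    omega
  have key : ∀ k : Fin 7,
      C (hepBnd k) (hepInner k) * u (hepInner k) +
      C (hepBnd k) (hepInner (k + 1)) * u (hepInner (k + 1)) = 0 := by
    intro k
    have h := congrFun hu (hepBnd k)
    simp only [Matrix.mulVec, dotProduct, Pi.zero_apply] at h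
    rw [Finset.sum_eq_add_of_mem (hepInner k) (hepInner (k + 1))
      (Finset.mem_univ _) (Finset.mem_univ _) (hne k) ?_] at h
    · exact h
    · intro j _ hj
      obtain ⟨hj1, hj2⟩ := hj
      by_cases hle : (j : ℕ) ≤ 7
      · rw [hsupp k j hle hj1 hj2, zero_mul]
      · rw [hbd j (by omega), mul_zero]
  -- ring values
  set x : Fin 7 → ℝ := fun k => u (hepInner k) with hx
  have keyx : ∀ k : Fin 7,
      C (hepBnd k) (hepInner k) * x k +
      C (hepBnd k) (hepInner (k + 1)) * x (k + 1) = 0 := key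
  have hring : ∀ k : Fin 7, x k = 0 := by
    have e0 := keyx 0; have e1 := keyx 1; have e2 := keyx 2
    have e3 := keyx 3; have e4 := keyx 4; have e5 := keyx 5
    have e6 := keyx 6
    have h77 : (7 : Fin 7) = 0 := by decide
    rw [show ((6 : Fin 7) + 1) = 0 from by decide] at e6
    have n0 := hneg 0; have n1 := hneg 1; have n2 := hneg 2
    have n3 := hneg 3; have n4 := hneg 4; have n5 := hneg 5
    have n6 := hneg 6
    norm_num at e0 e1 e2 e3 e4 e5 e6
    have h0 : x 0 = 0 := by
      rcases lt_trichotomy (x 0) 0 with h | h | h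
      · have p1 := hep_neg_step n0.1 n0.2 e0 h
        have p2 := hep_pos_step n1.1 n1.2 e1 p1
        have p3 := hep_neg_step n2.1 n2.2 e2 p2
        have p4 := hep_pos_step n3.1 n3.2 e3 p3
        have p5 := hep_neg_step n4.1 n4.2 e4 p4
        have p6 := hep_pos_step n5.1 n5.2 e5 p5
        have p0 := hep_neg_step n6.1 n6.2 e6 p6
        linarith
      · exact h
      · have p1 := hep_pos_step n0.1 n0.2 e0 h
        have p2 := hep_neg_step n1.1 n1.2 e1 p1
        have p3 := hep_pos_step n2.1 n2.2 e2 p2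
        have p4 := hep_neg_step n3.1 n3.2 e3 p3
        have p5 := hep_pos_step n4.1 n4.2 e4 p4
        have p6 := hep_neg_step n5.1 n5.2 e5 p5
        have p0 := hep_pos_step n6.1 n6.2 e6 p6
        linarith
    have h1 : x 1 = 0 := hep_zero_step n0.2 e0 h0
    have h2 : x 2 = 0 := hep_zero_step n1.2 e1 h1
    have h3 : x 3 = 0 := hep_zero_step n2.2 e2 h2
    have h4 : x 4 = 0 := hep_zero_step n3.2 e3 h3
    have h5 : x 5 = 0 := hep_zero_step n4.2 e4 h4
    have h6 : x 6 = 0 := hep_zero_step n5.2 e5 h5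
    intro k; fin_cases k <;> assumption
  have hinner : ∀ j : Fin 15, 1 ≤ (j : ℕ) → (j : ℕ) ≤ 7 → u j = 0 := by
    intro j h1 h7
    have hj : j = hepInner ⟨(j : ℕ) - 1, by omega⟩ := by
      simp [hepInner, Fin.ext_iff]; omega
    rw [hj]; exact hring _
  -- centre
  have hc : u 0 = 0 := by
    have h := congrFun hu 1
    simp only [Matrix.mulVec, dotProduct, Pi.zero_apply] at h
    rw [Finset.sum_eq_single (0 : Fin 15)] at h
    · rcases mul_eq_zero.1 h with h' | h'
      · exact absurd h' hcentre
      · exact h'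
    · intro j _ hj
      by_cases hle : (j : ℕ) ≤ 7
      · rw [hinner j (by omega : 1 ≤ (j : ℕ)) hle, mul_zero]
      · rw [hbd j (by omega), mul_zero]
    · intro h'; exact absurd (Finset.mem_univ _) h'
  funext i
  show u i = 0
  by_cases h0 : (i : ℕ) = 0
  · have : i = 0 := Fin.ext h0
    rw [this]; exact hc
  by_cases h7 : (i : ℕ) ≤ 7
  · exact hinner i (by omega) h7
  · exact hbd i (by omega)
end

section
/- Let n_I, n_B ≥ 1, n = n_I + n_B, and write vectors in ℝⁿ = ℝ^{n_I} ⊕ ℝ^{n_B} and n×n matrices in corresponding 2×2 block form with blocks indexed by I and B. Let s ↦ A(s) and s ↦ M(s) be n×n real symmetric-matrix-valued functions differentiable at s = 0, let s ↦ λ(s) ∈ ℝ and s ↦ u(s) ∈ ℝⁿ be differentiable at 0, and suppose A(s)u(s) = λ(s)M(s)u(s) for all s in a neighbourhood of 0. Write u(s) = (u_I(s), u_B(s)), set λ* = λ(0) and u_I = u_I(0), and assume u_B(0) = 0 and M_{BI}(0)u_I = 0. Let û_B ∈ ℝ^{n_B} satisfy (A_{IB}(0) − λ* M_{IB}(0))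 û_B = 0. If ⟨(A′_{BI}(0) − λ* M′_{BI}(0)) u_I, û_B⟩ ≠ 0, then u′_B(0) ≠ 0; consequently there exists ε > 0 such that u_B(s) ≠ 0 for all s with 0 < |s| < ε. -/
/-- Theorem 4.3: a simple Neumann eigenvector continuing an
inner solution acquires a nonzero boundary trace under a symmetry-breaking
deformation.  Vectors in `ℝⁿ = ℝ^{n_I} ⊕ ℝ^{n_B}` are indexed by
`Fin nI ⊕ Fin nB`, with `Sum.inl` the interior (I) indices and `Sum.inr` the
boundary (B) indices. -/
theorem deformation_breaks_inner_solution {nI nB : ℕ} (hnI : 1 ≤ nI) (hnB : 1 ≤ nB)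
    (A M : ℝ → Matrix (Fin nI ⊕ Fin nB) (Fin nI ⊕ Fin nB) ℝ)
    (A' M' : Matrix (Fin nI ⊕ Fin nB) (Fin nI ⊕ Fin nB) ℝ)
    (lam : ℝ → ℝ) (lam' : ℝ)
    (u : ℝ → (Fin nI ⊕ Fin nB) → ℝ) (u' : (Fin nI ⊕ Fin nB) → ℝ)
    (hAsym : ∀ s, (A s).IsSymm) (hMsym : ∀ s, (M s).IsSymm)
    (hAdiff : ∀ p q, HasDerivAt (fun s => A s p q) (A' p q) 0)
    (hMdiff : ∀ p q, HasDerivAt (fun s => M s p q) (M' p q) 0)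
    (hlamdiff : HasDerivAt lam lam' 0)
    (hudiff : ∀ p, HasDerivAt (fun s => u s p) (u' p) 0)
    (heig : ∃ δ > (0 : ℝ), ∀ s, |s| < δ →
      (A s).mulVec (u s) = lam s • (M s).mulVec (u s))
    (huB : ∀ i : Fin nB, u 0 (Sum.inr i) = 0)
    (hMBI : ∀ i : Fin nB,
      (∑ j : Fin nI, M 0 (Sum.inr i) (Sum.inl j) * u 0 (Sum.inl j)) = 0)
    (uhat : Fin nB → ℝ)
    (huhat : ∀ i : Fin nI,
      (∑ j : Fin nB, (A 0 (Sum.inl i) (Sum.inr j) -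
        lam 0 * M 0 (Sum.inl i) (Sum.inr j)) * uhat j) = 0)
    (hbreak : (∑ i : Fin nB,
      (∑ j : Fin nI, (A' (Sum.inr i) (Sum.inl j) -
        lam 0 * M' (Sum.inr i) (Sum.inl j)) * u 0 (Sum.inl j)) * uhat i) ≠ 0) :
    (∃ i : Fin nB, u' (Sum.inr i) ≠ 0) ∧
      ∃ ε > (0 : ℝ), ∀ s : ℝ, 0 < |s| → |s| < ε →
        ∃ i : Fin nB, u s (Sum.inr i) ≠ 0 := by
  obtain ⟨δ, hδ, heq⟩ := heig
  -- Derivative of the B-block rows of the eigenvalue equation at s = 0 vanishes.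
  have hD : ∀ i : Fin nB,
      ((∑ q, (A' (Sum.inr i) q * u 0 q + A 0 (Sum.inr i) q * u' q)) -
       (lam' * (∑ q, M 0 (Sum.inr i) q * u 0 q) +
        lam 0 * (∑ q, (M' (Sum.inr i) q * u 0 q + M 0 (Sum.inr i) q * u' q)))) = 0 := by
    intro i
    have h1 : HasDerivAt (fun s => ∑ q, A s (Sum.inr i) q * u s q)
        (∑ q, (A' (Sum.inr i) q * u 0 q + A 0 (Sum.inr i) q * u' q)) 0 :=
      HasDerivAt.fun_sum fun q _ => (hAdiff _ q).mul (hudiff q)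
    have h2 : HasDerivAt (fun s => ∑ q, M s (Sum.inr i) q * u s q)
        (∑ q, (M' (Sum.inr i) q * u 0 q + M 0 (Sum.inr i) q * u' q)) 0 :=
      HasDerivAt.fun_sum fun q _ => (hMdiff _ q).mul (hudiff q)
    have h3 := hlamdiff.mul h2
    have hg := h1.sub h3
    have hev : (fun s => (∑ q, A s (Sum.inr i) q * u s q) -
        lam s * (∑ q, M s (Sum.inr i) q * u s q)) =ᶠ[nhds 0] fun _ => (0 : ℝ) := by
      filter_upwards [Metric.ball_mem_nhds (0 : ℝ) hδ] with s hs
      have hs' : |s| < δ := by simpa [Real.dist_eq] using hs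
      have := congrFun (heq s hs') (Sum.inr i)
      simp only [Matrix.mulVec, dotProduct, Pi.smul_apply, smul_eq_mul] at this
      simpa [sub_eq_zero] using this
    have h0 : HasDerivAt (fun s => (∑ q, A s (Sum.inr i) q * u s q) -
        lam s * (∑ q, M s (Sum.inr i) q * u s q)) 0 0 :=
      (hasDerivAt_const (0 : ℝ) (0 : ℝ)).congr_of_eventuallyEq hev
    exact hg.unique h0
  -- First conclusion: some boundary derivative is nonzero.
  have hmain : ∃ i : Fin nB, u' (Sum.inr i) ≠ 0 := by
    by_contra hcon
    push_neg at hcon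
    apply hbreak
    -- Rewrite each D i using the vanishing of u and u' on the boundary block.
    have hDi : ∀ i : Fin nB,
        (∑ j : Fin nI, (A' (Sum.inr i) (Sum.inl j) -
            lam 0 * M' (Sum.inr i) (Sum.inl j)) * u 0 (Sum.inl j)) +
        (∑ j : Fin nI, (A 0 (Sum.inr i) (Sum.inl j) -
            lam 0 * M 0 (Sum.inr i) (Sum.inl j)) * u' (Sum.inl j)) = 0 := by
      intro i
      have := hD i
      rw [Fintype.sum_sum_type, Fintype.sum_sum_type, Fintype.sum_sum_type] at this
      simp only [huB, hcon, mul_zero, add_zero, zero_add, Finset.sum_const_zero] at this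
      rw [hMBI i, mul_zero, zero_add, Finset.mul_sum, ← Finset.sum_sub_distrib] at this
      rw [← Finset.sum_add_distrib]
      exact (Finset.sum_congr rfl fun j _ => by ring).trans this
    -- Sum the identities against uhat.
    have hsum : (∑ i : Fin nB,
        ((∑ j : Fin nI, (A' (Sum.inr i) (Sum.inl j) -
            lam 0 * M' (Sum.inr i) (Sum.inl j)) * u 0 (Sum.inl j)) +
         (∑ j : Fin nI, (A 0 (Sum.inr i) (Sum.inl j) -
            lam 0 * M 0 (Sum.inr i) (Sum.inl j)) * u' (Sum.inl j))) * uhat i) = 0 :=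
      Finset.sum_eq_zero fun i _ => by rw [hDi i, zero_mul]
    rw [Finset.sum_congr rfl (fun i _ => add_mul _ _ _), Finset.sum_add_distrib] at hsum
    -- The second double sum vanishes by symmetry and the kernel condition on uhat.
    have hker : (∑ i : Fin nB,
        (∑ j : Fin nI, (A 0 (Sum.inr i) (Sum.inl j) -
            lam 0 * M 0 (Sum.inr i) (Sum.inl j)) * u' (Sum.inl j)) * uhat i) = 0 := by
      simp_rw [Finset.sum_mul]
      rw [Finset.sum_comm]
      refine Finset.sum_eq_zero fun j _ => ?_
      have : (∑ i : Fin nB, (A 0 (Sum.inr i) (Sum.inl j) -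
          lam 0 * M 0 (Sum.inr i) (Sum.inl j)) * uhat i) = 0 := by
        refine Eq.trans ?_ (huhat j)
        exact Finset.sum_congr rfl fun i _ => by
          rw [(hAsym 0).apply (Sum.inl j) (Sum.inr i), (hMsym 0).apply (Sum.inl j) (Sum.inr i)]
      calc (∑ i : Fin nB, (A 0 (Sum.inr i) (Sum.inl j) -
              lam 0 * M 0 (Sum.inr i) (Sum.inl j)) * u' (Sum.inl j) * uhat i)
          = (∑ i : Fin nB, (A 0 (Sum.inr i) (Sum.inl j) -
              lam 0 * M 0 (Sum.inr i) (Sum.inl j)) * uhat i) * u' (Sum.inl j) := by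
            rw [Finset.sum_mul]; exact Finset.sum_congr rfl fun i _ => by ring
        _ = 0 := by rw [this, zero_mul]
    rw [hker, add_zero] at hsum
    exact hsum
  refine ⟨hmain, ?_⟩
  obtain ⟨i, hi⟩ := hmain
  -- Near 0, the slope of s ↦ u s (inr i) is close to the nonzero derivative.
  have hslope := hasDerivAt_iff_tendsto_slope.mp (hudiff (Sum.inr i))
  have hev : ∀ᶠ s in nhdsWithin (0 : ℝ) {(0 : ℝ)}ᶜ, slope (fun s => u s (Sum.inr i)) 0 s ≠ 0 :=
    hslope.eventually_ne hi
  have hev2 : ∀ᶠ s in nhdsWithin (0 : ℝ) {(0 : ℝ)}ᶜ, u s (Sum.inr i) ≠ 0 := by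
    filter_upwards [hev, self_mem_nhdsWithin] with s hs hs0
    intro hzero
    apply hs
    simp [slope, hzero, huB i]
  obtain ⟨ε, hε, hball⟩ := Metric.mem_nhdsWithin_iff.mp hev2
  refine ⟨ε, hε, fun s hs0 hsε => ?_⟩
  refine ⟨i, hball ⟨?_, ?_⟩⟩
  · simpa [Real.dist_eq] using hsε
  · simp only [Set.mem_compl_iff, Set.mem_singleton_iff]
    intro h; rw [h] at hs0; simp at hs0
end

section
/- Let n_I, n_B ≥ 1, n = n_I + n_B, and write n×n matrices in 2×2 block form with respect to ℝⁿ = ℝ^{n_I} ⊕ ℝ^{n_B}, with blocks indexed by I and B. Let A be real symmetric and M real symmetric positive definite, and fix λ ∈ ℝ such that A_{II} − λM_{II} is invertible. Define the n_B × n_B symmetric matrix Λ(λ) = (A_{BB} − λM_{BB}) − (A_{BI} − λM_{BI})(A_{II} − λM_{II})^{−1}(A_{IB} − λM_{IB}). Then Σ_{s<λ} dim ker(A − sM) − Σ_{s<λ} dim ker(A_{II} − sM_{II}) = n₋(Λ(λ)), and dim ker(A − λM) = n₀(Λ(λ)), where n₋(X) denotes the number of negative eigenvalues of a real symmetric matrix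 X counted with multiplicity and n₀(X) = dim ker X. -/
open Matrix

/-- The number of negative eigenvalues, counted with multiplicity, of an
endomorphism of a real vector space. -/
noncomputable def negCount {V : Type*} [AddCommGroup V] [Module ℝ V]
    (f : Module.End ℝ V) : ℕ :=
  ∑ᶠ t ∈ Set.Iio (0 : ℝ), Module.finrank ℝ ↥(Module.End.eigenspace f t)

open Module Finset
set_option linter.unusedSectionVars false
set_option linter.unusedVariables false
set_option maxHeartbeats 1000000



section F0




section conj
variable {V W : Type*} [AddCommGroup V] [Module ℝ V] [AddCommGroup W] [Module ℝ W]

lemma eigenspace_conj (e : V ≃ₗ[ℝ] W) (f : Module.End ℝ V) (t : ℝ) :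
    Module.End.eigenspace (e.conj f) t = (Module.End.eigenspace f t).map (e : V →ₗ[ℝ] W) := by
  ext w
  rw [Submodule.mem_map_equiv, Module.End.mem_eigenspace_iff, Module.End.mem_eigenspace_iff,
    LinearEquiv.conj_apply_apply]
  constructor
  · intro h
    have := congrArg e.symm h
    simpa using this
  · intro h
    rw [h]; simp

lemma negCount_conj (e : V ≃ₗ[ℝ] W) (f : Module.End ℝ V) :
    negCount (e.conj f) = negCount f := by
  unfold negCount
  refine finsum_mem_congr rfl fun t _ => ?_
  rw [eigenspace_conj]
  exact LinearEquiv.finrank_map_eq e _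

lemma ker_conj (e : V ≃ₗ[ℝ] W) (f : Module.End ℝ V) :
    LinearMap.ker (e.conj f) = (LinearMap.ker f).map (e : V →ₗ[ℝ] W) := by
  ext w
  rw [Submodule.mem_map_equiv, LinearMap.mem_ker, LinearMap.mem_ker,
    LinearEquiv.conj_apply_apply]
  constructor
  · intro h
    have := congrArg e.symm h
    simpa using this
  · intro h
    rw [h]; simp

lemma finrank_ker_conj (e : V ≃ₗ[ℝ] W) (f : Module.End ℝ V) :
    finrank ℝ (LinearMap.ker (e.conj f)) = finrank ℝ (LinearMap.ker f) := by
  rw [ker_conj]; exact LinearEquiv.finrank_map_eq e _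

end conj

section euclid
variable {n : Type*} [Fintype n] [DecidableEq n]

lemma toEuclideanLin_conj (A : Matrix n n ℝ) :
    toEuclideanLin A = ((WithLp.linearEquiv 2 ℝ (n → ℝ)).symm).conj (Matrix.toLin' A) := rfl

lemma negCount_toLin'_eq (A : Matrix n n ℝ) :
    negCount (Matrix.toLin' A) = negCount (toEuclideanLin A) := by
  rw [toEuclideanLin_conj, negCount_conj]

lemma finrank_ker_toLin'_eq (A : Matrix n n ℝ) :
    finrank ℝ (LinearMap.ker (Matrix.toLin' A)) = finrank ℝ (LinearMap.ker (toEuclideanLin A)) := by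
  rw [toEuclideanLin_conj, finrank_ker_conj]

end euclid

end F0

section F1


variable {n : Type*} [Fintype n] [DecidableEq n]

section spec
variable {A : Matrix n n ℝ}

lemma toEuclideanLin_eigvec (hA : A.IsHermitian) (j : n) :
    toEuclideanLin A (hA.eigenvectorBasis j) = hA.eigenvalues j • hA.eigenvectorBasis j := by
  have h := hA.mulVec_eigenvectorBasis j
  apply (WithLp.equiv 2 (n → ℝ)).injective
  simpa [Matrix.toEuclideanLin_apply] using h

lemma inner_eigvec_eq_zero (hA : A.IsHermitian) {v : EuclideanSpace ℝ n} {t : ℝ}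
    (hv : toEuclideanLin A v = t • v) (j : n) (hj : hA.eigenvalues j ≠ t) :
    inner ℝ (hA.eigenvectorBasis j) v = (0:ℝ) := by
  have hsym : (toEuclideanLin A).IsSymmetric := (Matrix.isHermitian_iff_isSymmetric).1 hA
  have h1 : inner ℝ (toEuclideanLin A (hA.eigenvectorBasis j)) v
      = inner ℝ (hA.eigenvectorBasis j) (toEuclideanLin A v) := hsym _ _
  rw [toEuclideanLin_eigvec hA, hv, real_inner_smul_left, real_inner_smul_right] at h1
  have := sub_eq_zero.2 h1
  rw [← sub_mul] at this
  rcases mul_eq_zero.1 this with h | h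
  · exact absurd (sub_eq_zero.1 h) hj
  · exact h

/-- span of eigenbasis vectors over a predicate. -/
noncomputable def eigSpan (hA : A.IsHermitian) (p : n → Prop) :
    Submodule ℝ (EuclideanSpace ℝ n) :=
  Submodule.span ℝ (Set.range fun i : {i // p i} => hA.eigenvectorBasis i)

lemma mem_eigSpan_iff (hA : A.IsHermitian) (p : n → Prop) (v : EuclideanSpace ℝ n) :
    v ∈ eigSpan hA p ↔ ∀ j, ¬ p j → inner ℝ (hA.eigenvectorBasis j) v = (0:ℝ) := by
  constructor
  · intro hv j hj
    induction hv using Submodule.span_induction with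
    | mem x hx =>
      obtain ⟨⟨i, hi⟩, rfl⟩ := hx
      have : j ≠ i := fun h => hj (h ▸ hi)
      simpa using hA.eigenvectorBasis.orthonormal.2 this
    | zero => simp
    | add x y _ _ hx hy => rw [inner_add_right, hx, hy, add_zero]
    | smul c x _ hx => rw [real_inner_smul_right, hx, mul_zero]
  · intro h
    rw [← hA.eigenvectorBasis.sum_repr' v]
    refine Submodule.sum_mem _ fun j _ => ?_
    by_cases hj : p j
    · exact Submodule.smul_mem _ _ (Submodule.subset_span ⟨⟨j, hj⟩, rfl⟩)
    · rw [h j hj]; simp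

lemma finrank_eigSpan (hA : A.IsHermitian) (p : n → Prop) [DecidablePred p] :
    finrank ℝ ↥(eigSpan hA p) = (univ.filter p).card := by
  rw [eigSpan, finrank_span_eq_card]
  · simp [Fintype.card_subtype]
  · exact hA.eigenvectorBasis.orthonormal.linearIndependent.comp _ Subtype.val_injective

lemma eigenspace_toEuclideanLin_eq_span (hA : A.IsHermitian) (t : ℝ) :
    Module.End.eigenspace (toEuclideanLin A) t = eigSpan hA (fun i => hA.eigenvalues i = t) := by
  apply le_antisymm
  · intro v hv
    rw [Module.End.mem_eigenspace_iff] at hv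
    rw [mem_eigSpan_iff]
    exact fun j hj => inner_eigvec_eq_zero hA hv j hj
  · rw [eigSpan, Submodule.span_le]
    rintro x ⟨⟨j, hj⟩, rfl⟩
    simp only [SetLike.mem_coe, Module.End.mem_eigenspace_iff]
    rw [toEuclideanLin_eigvec hA, hj]

lemma finrank_eigenspace_toEuclideanLin (hA : A.IsHermitian) (t : ℝ) :
    finrank ℝ ↥(Module.End.eigenspace (toEuclideanLin A) t)
      = (univ.filter (fun i => hA.eigenvalues i = t)).card := by
  rw [eigenspace_toEuclideanLin_eq_span hA t, finrank_eigSpan]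

end spec

end F1

section F2



variable {n : Type*} [Fintype n] [DecidableEq n] {A : Matrix n n ℝ}

lemma negCount_toEuclideanLin (hA : A.IsHermitian) :
    negCount (toEuclideanLin A) = (univ.filter (fun i => hA.eigenvalues i < 0)).card := by
  classical
  unfold negCount
  have h1 : ∀ t : ℝ, finrank ℝ ↥(Module.End.eigenspace (toEuclideanLin A) t)
      = (univ.filter (fun i => hA.eigenvalues i = t)).card :=
    finrank_eigenspace_toEuclideanLin hA
  set F : Finset ℝ := (univ.image hA.eigenvalues).filter (fun t => t < 0) with hF
  have hsupp : Set.Iio (0:ℝ) ∩ Function.support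
        (fun t => (finrank ℝ ↥(Module.End.eigenspace (toEuclideanLin A) t)))
      = ↑F ∩ Function.support
        (fun t => (finrank ℝ ↥(Module.End.eigenspace (toEuclideanLin A) t))) := by
    ext t
    simp only [Set.mem_inter_iff, Set.mem_Iio, Function.mem_support, coe_filter, mem_image,
      Set.mem_setOf_eq, hF, coe_filter, Finset.mem_coe, mem_filter, mem_image, mem_univ, true_and]
    constructor
    · rintro ⟨ht, hne⟩
      refine ⟨⟨?_, ht⟩, hne⟩
      rw [h1] at hne
      obtain ⟨i, hi⟩ := Finset.card_pos.1 (Nat.pos_of_ne_zero hne)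
      exact ⟨i, (mem_filter.1 hi).2⟩
    · rintro ⟨⟨_, ht⟩, hne⟩
      exact ⟨ht, hne⟩
  rw [finsum_mem_inter_support_eq _ _ _ hsupp, finsum_mem_coe_finset]
  have : ∀ t ∈ F, finrank ℝ ↥(Module.End.eigenspace (toEuclideanLin A) t)
      = ((univ.filter (fun i => hA.eigenvalues i < 0)).filter
          (fun i => hA.eigenvalues i = t)).card := by
    intro t htF
    rw [h1]
    congr 1
    ext i
    simp only [mem_filter, mem_univ, true_and, hF] at htF ⊢
    constructor
    · intro h
      subst h
      exact ⟨htF.2, rfl⟩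
    · rintro ⟨_, h⟩; exact h
  rw [Finset.sum_congr rfl this]
  rw [← Finset.card_eq_sum_card_fiberwise]
  intro i hi
  simp only [mem_filter, mem_univ, true_and, hF, mem_image] at hi ⊢
  exact Finset.mem_filter.2 ⟨Finset.mem_image_of_mem _ (Finset.mem_univ i), (Finset.mem_filter.1 (Finset.mem_coe.1 hi)).2⟩

lemma finrank_ker_toEuclideanLin (hA : A.IsHermitian) :
    finrank ℝ ↥(LinearMap.ker (toEuclideanLin A))
      = (univ.filter (fun i => hA.eigenvalues i = 0)).card := by
  rw [← Module.End.eigenspace_zero (toEuclideanLin A)]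
  exact finrank_eigenspace_toEuclideanLin hA 0

end F2

section F3

variable {n : Type*} [Fintype n] [DecidableEq n] {A : Matrix n n ℝ}



-- quadratic form value
lemma inner_toEuclideanLin_eq_sum (hA : A.IsHermitian) (v : EuclideanSpace ℝ n) :
    inner ℝ v (toEuclideanLin A v)
      = ∑ i, hA.eigenvalues i * (inner ℝ (hA.eigenvectorBasis i) v : ℝ)^2 := by
  set b := hA.eigenvectorBasis
  conv_lhs => rw [show toEuclideanLin A v = ∑ i, ((inner ℝ (b i) v : ℝ) * hA.eigenvalues i) • b i by
    conv_lhs => rw [← b.sum_repr' v]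
    rw [map_sum]
    refine Finset.sum_congr rfl fun i _ => ?_
    rw [_root_.map_smul, toEuclideanLin_eigvec hA i, smul_smul, mul_comm]]
  rw [inner_sum]
  refine Finset.sum_congr rfl fun i _ => ?_
  rw [real_inner_smul_right]
  have : (inner ℝ v (b i) : ℝ) = inner ℝ (b i) v := real_inner_comm _ _
  rw [this]; ring

lemma quadform_neg_on_eigSpan (hA : A.IsHermitian) {v : EuclideanSpace ℝ n}
    (hv : v ∈ eigSpan hA (fun i => hA.eigenvalues i < 0)) (hv0 : v ≠ 0) :
    inner ℝ v (toEuclideanLin A v) < (0:ℝ) := by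
  rw [inner_toEuclideanLin_eq_sum hA v]
  rw [mem_eigSpan_iff] at hv
  obtain ⟨j, hj⟩ : ∃ j, (inner ℝ (hA.eigenvectorBasis j) v : ℝ) ≠ 0 := by
    by_contra h
    push_neg at h
    apply hv0
    rw [← hA.eigenvectorBasis.sum_repr' v]
    refine Finset.sum_eq_zero fun i _ => by rw [h i, zero_smul]
  have hj' : hA.eigenvalues j < 0 := by
    by_contra h
    exact hj (hv j h)
  have : ∀ i ∈ univ, hA.eigenvalues i * (inner ℝ (hA.eigenvectorBasis i) v : ℝ)^2 ≤ 0 := by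
    intro i _
    by_cases hi : hA.eigenvalues i < 0
    · exact mul_nonpos_of_nonpos_of_nonneg hi.le (sq_nonneg _)
    · rw [hv i hi]; simp
  calc ∑ i, hA.eigenvalues i * (inner ℝ (hA.eigenvectorBasis i) v : ℝ)^2
      < ∑ _i : n, (0:ℝ) := by
        refine Finset.sum_lt_sum this ⟨j, Finset.mem_univ j, ?_⟩
        exact mul_neg_of_neg_of_pos hj' (by positivity)
    _ = 0 := by simp

lemma quadform_nonneg_on_eigSpan (hA : A.IsHermitian) {v : EuclideanSpace ℝ n}
    (hv : v ∈ eigSpan hA (fun i => 0 ≤ hA.eigenvalues i)) :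
    (0:ℝ) ≤ inner ℝ v (toEuclideanLin A v) := by
  rw [inner_toEuclideanLin_eq_sum hA v]
  rw [mem_eigSpan_iff] at hv
  refine Finset.sum_nonneg fun i _ => ?_
  by_cases hi : 0 ≤ hA.eigenvalues i
  · exact mul_nonneg hi (sq_nonneg _)
  · rw [hv i hi]; simp

end F3

section F4



variable {n : Type*} [Fintype n] [DecidableEq n] {A P : Matrix n n ℝ}



lemma finrank_le_negCount_of_negdef (hA : A.IsHermitian) (W : Submodule ℝ (EuclideanSpace ℝ n))
    (hW : ∀ v ∈ W, v ≠ 0 → inner ℝ v (toEuclideanLin A v) < (0:ℝ)) :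
    finrank ℝ ↥W ≤ negCount (toEuclideanLin A) := by
  classical
  set Ppos := eigSpan hA (fun i => 0 ≤ hA.eigenvalues i) with hPpos
  have hinf : W ⊓ Ppos = ⊥ := by
    rw [Submodule.eq_bot_iff]
    intro v hv
    by_contra hv0
    exact absurd (quadform_nonneg_on_eigSpan hA hv.2)
      (not_le.2 (hW v hv.1 hv0))
  have h1 : finrank ℝ ↥W + finrank ℝ ↥Ppos
      = finrank ℝ ↥(W ⊔ Ppos) + finrank ℝ ↥(W ⊓ Ppos) :=
    (Submodule.finrank_sup_add_finrank_inf_eq W Ppos).symm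
  rw [hinf] at h1
  simp only [finrank_bot, add_zero] at h1
  have h2 : finrank ℝ ↥(W ⊔ Ppos) ≤ Fintype.card n := by
    simpa [finrank_euclideanSpace] using Submodule.finrank_le (W ⊔ Ppos)
  have h3 : finrank ℝ ↥Ppos = (univ.filter (fun i => 0 ≤ hA.eigenvalues i)).card :=
    finrank_eigSpan hA _
  have h4 : (univ.filter (fun i => hA.eigenvalues i < 0)).card
      + (univ.filter (fun i => 0 ≤ hA.eigenvalues i)).card = Fintype.card n := by
    rw [← Finset.card_univ]
    have := Finset.card_filter_add_card_filter_not
      (s := (univ : Finset n)) (p := fun i => hA.eigenvalues i < 0)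
    simp only [not_lt] at this
    exact this
  rw [negCount_toEuclideanLin hA]
  omega

lemma toEuclideanLin_mul (X Y : Matrix n n ℝ) :
    toEuclideanLin (X * Y) = (toEuclideanLin X).comp (toEuclideanLin Y) := by
  apply LinearMap.ext
  intro v
  apply (WithLp.equiv 2 (n → ℝ)).injective
  simp [Matrix.toEuclideanLin_apply, mulVec_mulVec]

lemma toEuclideanLin_one : toEuclideanLin (1 : Matrix n n ℝ) = LinearMap.id := by
  apply LinearMap.ext
  intro v
  apply (WithLp.equiv 2 (n → ℝ)).injective
  simp [Matrix.toEuclideanLin_apply]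

/-- the linear equivalence of Euclidean space given by an invertible matrix -/
noncomputable def euclidEquiv (P : Matrix n n ℝ) (hP : IsUnit P.det) :
    EuclideanSpace ℝ n ≃ₗ[ℝ] EuclideanSpace ℝ n :=
  LinearEquiv.ofLinear (toEuclideanLin P) (toEuclideanLin P⁻¹)
    (by rw [← toEuclideanLin_mul, Matrix.mul_nonsing_inv _ hP, toEuclideanLin_one])
    (by rw [← toEuclideanLin_mul, Matrix.nonsing_inv_mul _ hP, toEuclideanLin_one])

lemma inner_congr_quadform (A P : Matrix n n ℝ) (v : EuclideanSpace ℝ n) :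
    (inner ℝ v (toEuclideanLin (Pᵀ * A * P) v) : ℝ)
      = inner ℝ (toEuclideanLin P v) (toEuclideanLin A (toEuclideanLin P v)) := by
  have hPt : Pᵀ = Pᴴ := (conjTranspose_eq_transpose_of_trivial P).symm
  rw [toEuclideanLin_mul, toEuclideanLin_mul, hPt,
    Matrix.toEuclideanLin_conjTranspose_eq_adjoint]
  simp only [LinearMap.comp_apply]
  rw [LinearMap.adjoint_inner_right]

lemma isHermitian_congr (hA : A.IsHermitian) (P : Matrix n n ℝ) :
    (Pᵀ * A * P).IsHermitian := by
  have h : ∀ X : Matrix n n ℝ, Xᴴ = Xᵀ := fun X => conjTranspose_eq_transpose_of_trivial X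
  have hAt : Aᵀ = A := by rw [← h]; exact hA.eq
  rw [Matrix.IsHermitian, h, transpose_mul, transpose_mul, transpose_transpose, hAt,
    Matrix.mul_assoc]

lemma negCount_congr_le (hA : A.IsHermitian) (hP : IsUnit P.det) :
    negCount (toEuclideanLin (Pᵀ * A * P)) ≤ negCount (toEuclideanLin A) := by
  classical
  set B := Pᵀ * A * P with hBdef
  have hB : B.IsHermitian := isHermitian_congr hA P
  have e := euclidEquiv P hP
  set WB := eigSpan hB (fun i => hB.eigenvalues i < 0) with hWB
  set W := WB.map (euclidEquiv P hP : EuclideanSpace ℝ n →ₗ[ℝ] EuclideanSpace ℝ n) with hW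
  have hWneg : ∀ v ∈ W, v ≠ 0 → inner ℝ v (toEuclideanLin A v) < (0:ℝ) := by
    rintro v hv hv0
    rw [hW, Submodule.mem_map] at hv
    obtain ⟨u, hu, rfl⟩ := hv
    have hu0 : u ≠ 0 := by
      rintro rfl; exact hv0 (map_zero _)
    have := quadform_neg_on_eigSpan hB hu hu0
    rw [inner_congr_quadform A P u] at this
    exact this
  have h1 := finrank_le_negCount_of_negdef hA W hWneg
  have h2 : finrank ℝ ↥W = finrank ℝ ↥WB :=
    LinearEquiv.finrank_map_eq (euclidEquiv P hP) WB
  rw [negCount_toEuclideanLin hB, ← finrank_eigSpan hB _]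
  rw [h2] at h1
  exact h1

lemma negCount_congr (hA : A.IsHermitian) (hP : IsUnit P.det) :
    negCount (toEuclideanLin (Pᵀ * A * P)) = negCount (toEuclideanLin A) := by
  refine le_antisymm (negCount_congr_le hA hP) ?_
  have hB : (Pᵀ * A * P).IsHermitian := isHermitian_congr hA P
  have hPinv : IsUnit (P⁻¹).det := by
    rw [Matrix.det_nonsing_inv]
    exact hP.ringInverse
  have h := negCount_congr_le hB hPinv
  have key : (P⁻¹)ᵀ * (Pᵀ * A * P) * P⁻¹ = A := by
    rw [Matrix.transpose_nonsing_inv]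
    calc (Pᵀ)⁻¹ * (Pᵀ * A * P) * P⁻¹
        = ((Pᵀ)⁻¹ * Pᵀ) * A * (P * P⁻¹) := by simp only [Matrix.mul_assoc]
      _ = A := by
          rw [Matrix.nonsing_inv_mul _ (by rwa [Matrix.det_transpose]), Matrix.mul_nonsing_inv _ hP]
          simp
  rwa [key] at h

end F4

section F5



section prodsub
variable {M N : Type*} [AddCommGroup M] [AddCommGroup N] [Module ℝ M] [Module ℝ N]

/-- a submodule product is equivalent to the product of submodules -/
def prodSubEquiv (p : Submodule ℝ M) (q : Submodule ℝ N) : ↥(p.prod q) ≃ₗ[ℝ] ↥p × ↥q where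
  toFun x := (⟨x.1.1, x.2.1⟩, ⟨x.1.2, x.2.2⟩)
  map_add' x y := rfl
  map_smul' c x := rfl
  invFun y := ⟨(y.1.1, y.2.1), ⟨y.1.2, y.2.2⟩⟩
  left_inv x := rfl
  right_inv y := rfl

lemma finrank_prod_sub (p : Submodule ℝ M) (q : Submodule ℝ N)
    [FiniteDimensional ℝ p] [FiniteDimensional ℝ q] :
    finrank ℝ ↥(p.prod q) = finrank ℝ ↥p + finrank ℝ ↥q := by
  rw [LinearEquiv.finrank_eq (prodSubEquiv p q), Module.finrank_prod]

end prodsub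

section prodmap
variable {V W : Type*} [AddCommGroup V] [Module ℝ V] [AddCommGroup W] [Module ℝ W]

lemma eigenspace_prodMap (f : Module.End ℝ V) (g : Module.End ℝ W) (t : ℝ) :
    Module.End.eigenspace (f.prodMap g : Module.End ℝ (V × W)) t
      = (Module.End.eigenspace f t).prod (Module.End.eigenspace g t) := by
  ext ⟨x, y⟩
  simp only [Module.End.mem_eigenspace_iff, Submodule.mem_prod, LinearMap.prodMap_apply,
    Prod.smul_mk, Prod.mk.injEq]

lemma negCount_prodMap [FiniteDimensional ℝ V] [FiniteDimensional ℝ W]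
    (f : Module.End ℝ V) (g : Module.End ℝ W) :
    negCount (f.prodMap g : Module.End ℝ (V × W)) = negCount f + negCount g := by
  unfold negCount
  have hsupf : (Set.Iio (0:ℝ) ∩ Function.support
      (fun t => finrank ℝ ↥(Module.End.eigenspace f t))).Finite := by
    refine Set.Finite.subset (Module.End.finite_hasEigenvalue f) ?_
    rintro t ⟨-, ht⟩
    rw [Function.mem_support] at ht
    show f.HasEigenvalue t
    rw [Module.End.hasEigenvalue_iff]
    intro hbot
    exact ht (by rw [hbot, finrank_bot])
  have hsupg : (Set.Iio (0:ℝ) ∩ Function.support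
      (fun t => finrank ℝ ↥(Module.End.eigenspace g t))).Finite := by
    refine Set.Finite.subset (Module.End.finite_hasEigenvalue g) ?_
    rintro t ⟨-, ht⟩
    rw [Function.mem_support] at ht
    show g.HasEigenvalue t
    rw [Module.End.hasEigenvalue_iff]
    intro hbot
    exact ht (by rw [hbot, finrank_bot])
  rw [← finsum_mem_add_distrib' hsupf hsupg]
  refine finsum_mem_congr rfl fun t _ => ?_
  rw [eigenspace_prodMap, finrank_prod_sub]
end prodmap

section blocks
variable {l m : Type*} [Fintype l] [DecidableEq l] [Fintype m] [DecidableEq m]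

lemma toLin'_fromBlocks_conj (Y : Matrix l l ℝ) (Z : Matrix m m ℝ) :
    (LinearEquiv.sumArrowLequivProdArrow l m ℝ ℝ).conj (Matrix.toLin' (fromBlocks Y 0 0 Z))
      = (Matrix.toLin' Y).prodMap (Matrix.toLin' Z) := by
  apply LinearMap.ext
  rintro ⟨x, y⟩
  have hsy : ((LinearEquiv.sumArrowLequivProdArrow l m ℝ ℝ)).symm (x, y) = Sum.elim x y := rfl
  rw [LinearEquiv.conj_apply_apply, hsy]
  apply Prod.ext <;> funext i <;>
    simp [Matrix.toLin'_apply, Matrix.fromBlocks_mulVec,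
      LinearEquiv.sumArrowLequivProdArrow, Equiv.sumArrowEquivProdArrow]

lemma negCount_toLin'_fromBlocks (Y : Matrix l l ℝ) (Z : Matrix m m ℝ) :
    negCount (Matrix.toLin' (fromBlocks Y 0 0 Z))
      = negCount (Matrix.toLin' Y) + negCount (Matrix.toLin' Z) := by
  rw [← negCount_conj (LinearEquiv.sumArrowLequivProdArrow l m ℝ ℝ)
      (Matrix.toLin' (fromBlocks Y 0 0 Z)), toLin'_fromBlocks_conj, negCount_prodMap]

lemma finrank_eigenspace_fromBlocks (Y : Matrix l l ℝ) (Z : Matrix m m ℝ) (t : ℝ) :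
    finrank ℝ ↥(Module.End.eigenspace (Matrix.toLin' (fromBlocks Y 0 0 Z)) t)
      = finrank ℝ ↥(Module.End.eigenspace (Matrix.toLin' Y) t)
        + finrank ℝ ↥(Module.End.eigenspace (Matrix.toLin' Z) t) := by
  set e := LinearEquiv.sumArrowLequivProdArrow l m ℝ ℝ
  calc finrank ℝ ↥(Module.End.eigenspace (Matrix.toLin' (fromBlocks Y 0 0 Z)) t)
      = finrank ℝ ↥((Module.End.eigenspace (Matrix.toLin' (fromBlocks Y 0 0 Z)) t).map
          (e : ((l ⊕ m) → ℝ) →ₗ[ℝ] (l → ℝ) × (m → ℝ))) :=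
        (LinearEquiv.finrank_map_eq e _).symm
    _ = finrank ℝ ↥(Module.End.eigenspace (e.conj (Matrix.toLin' (fromBlocks Y 0 0 Z))) t) := by
        rw [eigenspace_conj]
    _ = _ := by
        rw [toLin'_fromBlocks_conj, eigenspace_prodMap, finrank_prod_sub]

lemma finrank_ker_toLin'_fromBlocks (Y : Matrix l l ℝ) (Z : Matrix m m ℝ) :
    finrank ℝ ↥(LinearMap.ker (Matrix.toLin' (fromBlocks Y 0 0 Z)))
      = finrank ℝ ↥(LinearMap.ker (Matrix.toLin' Y))
        + finrank ℝ ↥(LinearMap.ker (Matrix.toLin' Z)) := by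
  rw [← Module.End.eigenspace_zero, ← Module.End.eigenspace_zero, ← Module.End.eigenspace_zero]
  exact finrank_eigenspace_fromBlocks Y Z 0

end blocks

end F5

section F6



variable {n : Type*} [Fintype n] [DecidableEq n]

/-- invertible matrix gives a linear equivalence via toLin' -/
noncomputable def lin'Equiv (P : Matrix n n ℝ) (hP : IsUnit P.det) :
    (n → ℝ) ≃ₗ[ℝ] (n → ℝ) :=
  LinearEquiv.ofLinear (Matrix.toLin' P) (Matrix.toLin' P⁻¹)
    (by rw [← Matrix.toLin'_mul, Matrix.mul_nonsing_inv _ hP, Matrix.toLin'_one])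
    (by rw [← Matrix.toLin'_mul, Matrix.nonsing_inv_mul _ hP, Matrix.toLin'_one])

lemma ker_toLin'_eq_bot {P : Matrix n n ℝ} (hP : IsUnit P.det) :
    LinearMap.ker (Matrix.toLin' P) = ⊥ :=
  LinearMap.ker_eq_bot.2 (lin'Equiv P hP).injective

lemma finrank_ker_mul_mul {P Q : Matrix n n ℝ} (X : Matrix n n ℝ)
    (hP : IsUnit P.det) (hQ : IsUnit Q.det) :
    finrank ℝ ↥(LinearMap.ker (Matrix.toLin' (P * X * Q)))
      = finrank ℝ ↥(LinearMap.ker (Matrix.toLin' X)) := by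
  have h1 : Matrix.toLin' (P * X * Q)
      = (Matrix.toLin' P).comp ((Matrix.toLin' X).comp (Matrix.toLin' Q)) := by
    rw [← Matrix.toLin'_mul, ← Matrix.toLin'_mul, Matrix.mul_assoc]
  rw [h1, LinearMap.ker_comp, ker_toLin'_eq_bot hP, Submodule.comap_bot, LinearMap.ker_comp]
  have h2 : (Matrix.toLin' Q) = ((lin'Equiv Q hQ : (n → ℝ) ≃ₗ[ℝ] (n → ℝ))
      : (n → ℝ) →ₗ[ℝ] (n → ℝ)) := rfl
  rw [h2, Submodule.comap_equiv_eq_map_symm]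
  exact LinearEquiv.finrank_map_eq _ _

lemma ker_toLin'_sub_smul_one (B : Matrix n n ℝ) (s : ℝ) :
    LinearMap.ker (Matrix.toLin' (B - s • (1 : Matrix n n ℝ)))
      = Module.End.eigenspace (Matrix.toLin' B) s := by
  rw [Module.End.eigenspace_def]
  congr 1
  rw [map_sub, _root_.map_smul, Matrix.toLin'_one]
  rfl

lemma eigenspace_sub_smul_one {V : Type*} [AddCommGroup V] [Module ℝ V]
    (f : Module.End ℝ V) (lam t : ℝ) :
    Module.End.eigenspace (f - lam • (1 : Module.End ℝ V)) t
      = Module.End.eigenspace f (t + lam) := by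
  rw [Module.End.eigenspace_def, Module.End.eigenspace_def]
  congr 1
  rw [add_smul, sub_sub, add_comm (lam • (1:Module.End ℝ V))]

theorem pencil_count (A M : Matrix n n ℝ) (hA : A.IsHermitian) (hM : M.PosDef) (lam : ℝ) :
    (Set.Iio lam ∩ Function.support
        (fun s => finrank ℝ ↥(LinearMap.ker (Matrix.toLin' (A - s • M))))).Finite ∧
    ∑ᶠ s ∈ Set.Iio lam, finrank ℝ ↥(LinearMap.ker (Matrix.toLin' (A - s • M)))
      = negCount (Matrix.toLin' (A - lam • M)) := by
  classical
  obtain ⟨S, hS, hSS⟩ : ∃ S : Matrix n n ℝ, S.IsHermitian ∧ S * S = M := by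
    open scoped MatrixOrder in
    exact ⟨CFC.sqrt M, (CFC.sqrt_nonneg M).posSemidef.1,
      CFC.sqrt_mul_sqrt_self M hM.posSemidef.nonneg⟩
  have hdetS : IsUnit S.det := by
    have hdM : M.det ≠ 0 := ne_of_gt hM.det_pos
    rw [← hSS, det_mul] at hdM
    exact isUnit_iff_ne_zero.2 (left_ne_zero_of_mul hdM)
  have hSt : Sᵀ = S := by
    rw [← conjTranspose_eq_transpose_of_trivial]; exact hS.eq
  have hSinvt : (S⁻¹)ᵀ = S⁻¹ := by rw [Matrix.transpose_nonsing_inv, hSt]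
  set B := S⁻¹ * A * S⁻¹ with hBdef
  have hB : B.IsHermitian := by
    have := isHermitian_congr hA (S⁻¹)
    rwa [hSinvt] at this
  have hkey : ∀ s : ℝ, S * (B - s • (1 : Matrix n n ℝ)) * S = A - s • M := by
    intro s
    rw [Matrix.mul_sub, Matrix.sub_mul, Matrix.mul_smul, Matrix.mul_one, Matrix.smul_mul, hSS]
    congr 1
    rw [hBdef]
    calc S * (S⁻¹ * A * S⁻¹) * S = (S * S⁻¹) * A * (S⁻¹ * S) := by
          simp only [Matrix.mul_assoc]
      _ = A := by
          rw [Matrix.mul_nonsing_inv _ hdetS, Matrix.nonsing_inv_mul _ hdetS, Matrix.one_mul,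
            Matrix.mul_one]
  have hstep : ∀ s : ℝ, finrank ℝ ↥(LinearMap.ker (Matrix.toLin' (A - s • M)))
      = finrank ℝ ↥(Module.End.eigenspace (Matrix.toLin' B) s) := by
    intro s
    rw [← hkey s, finrank_ker_mul_mul _ hdetS hdetS, ker_toLin'_sub_smul_one]
  constructor
  · have hfun : (fun s : ℝ => finrank ℝ ↥(LinearMap.ker (Matrix.toLin' (A - s • M))))
        = fun s => finrank ℝ ↥(Module.End.eigenspace (Matrix.toLin' B) s) := funext hstep
    rw [hfun]
    refine Set.Finite.subset (Module.End.finite_hasEigenvalue (Matrix.toLin' B)) ?_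
    rintro t ⟨-, ht⟩
    rw [Function.mem_support] at ht
    show Module.End.HasEigenvalue (Matrix.toLin' B) t
    rw [Module.End.hasEigenvalue_iff]
    intro hbot
    exact ht (by rw [hbot, finrank_bot])
  rw [finsum_mem_congr rfl fun s _ => hstep s]
  have himg : Set.Iio lam = (fun t => t + lam) '' Set.Iio (0:ℝ) := by
    rw [Set.image_add_const_Iio, zero_add]
  rw [himg, finsum_mem_image (add_left_injective lam).injOn]
  have hsh : ∀ t : ℝ, finrank ℝ ↥(Module.End.eigenspace (Matrix.toLin' B) (t + lam))
      = finrank ℝ ↥(Module.End.eigenspace (Matrix.toLin' (B - lam • 1)) t) := by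
    intro t
    have heq : Module.End.eigenspace (Matrix.toLin' (B - lam • 1)) t
        = Module.End.eigenspace (Matrix.toLin' B) (t + lam) := by
      rw [show Matrix.toLin' (B - lam • (1 : Matrix n n ℝ))
          = Matrix.toLin' B - lam • (1 : Module.End ℝ (n → ℝ)) by
        rw [map_sub, _root_.map_smul, Matrix.toLin'_one]; rfl]
      rw [eigenspace_sub_smul_one]
    rw [heq]
  rw [finsum_mem_congr rfl fun t _ => hsh t]
  have h1 : negCount (Matrix.toLin' (B - lam • 1))
      = ∑ᶠ t ∈ Set.Iio (0:ℝ), finrank ℝ ↥(Module.End.eigenspace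
          (Matrix.toLin' (B - lam • 1)) t) := rfl
  rw [← h1, negCount_toLin'_eq, negCount_toLin'_eq]
  have hBl : (B - lam • (1 : Matrix n n ℝ)).IsHermitian := by
    refine hB.sub ?_
    rw [Matrix.IsHermitian, conjTranspose_smul, conjTranspose_one]
    simp
  have := negCount_congr hBl hdetS
  rw [hSt, hkey lam] at this
  exact this.symm

end F6

section F7

lemma finsum_mem_nat_cast {s : Set ℝ} (g : ℝ → ℕ) (h : (s ∩ Function.support g).Finite) :
    ∑ᶠ t ∈ s, ((g t : ℤ)) = ((∑ᶠ t ∈ s, g t : ℕ) : ℤ) := by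
  have hsupp : Function.support (fun t => ((g t : ℤ))) = Function.support g := by
    ext t
    simp [Function.mem_support]
  have h2 : (s ∩ Function.support fun t => ((g t : ℤ))).Finite := by rwa [hsupp]
  rw [finsum_mem_eq_sum _ h2, finsum_mem_eq_sum _ h]
  rw [Nat.cast_sum]
  apply Finset.sum_congr
  · ext t
    simp only [Set.Finite.mem_toFinset, Set.mem_inter_iff, Function.mem_support, hsupp]
  · intro x _; rfl

end F7

section F8







variable {l m : Type*} [Fintype l] [DecidableEq l] [Fintype m] [DecidableEq m]
lemma posDef_submatrix_inl {M : Matrix (l ⊕ m) (l ⊕ m) ℝ} (hM : M.PosDef) :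
    (M.submatrix Sum.inl Sum.inl).PosDef := by
  exact hM.submatrix Sum.inl_injective


/-- Theorem 5.1 when λ is not a Dirichlet eigenvalue: the
difference of the Neumann and Dirichlet counting functions is the number of
negative eigenvalues of the Schur complement (the discrete
Dirichlet-to-Neumann map), and the Neumann multiplicity of λ is its nullity.
Matrices on `ℝⁿ = ℝ^{n_I} ⊕ ℝ^{n_B}` are indexed by `Fin nI ⊕ Fin nB`, with
blocks obtained via `Matrix.submatrix` with `Sum.inl`/`Sum.inr`. -/
theorem interlacing_formula_invertible {nI nB : ℕ} (hnI : 1 ≤ nI) (hnB : 1 ≤ nB)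
    (A M : Matrix (Fin nI ⊕ Fin nB) (Fin nI ⊕ Fin nB) ℝ)
    (hA : A.IsSymm) (hM : M.PosDef) (lam : ℝ)
    (hinv : IsUnit (A.submatrix Sum.inl Sum.inl - lam • M.submatrix Sum.inl Sum.inl)) :
    ((∑ᶠ s ∈ Set.Iio lam, Module.finrank ℝ
          ↥(LinearMap.ker (Matrix.toLin' (A - s • M))) : ℤ) -
        (∑ᶠ s ∈ Set.Iio lam, Module.finrank ℝ
          ↥(LinearMap.ker (Matrix.toLin' (A.submatrix Sum.inl Sum.inl -
            s • M.submatrix Sum.inl Sum.inl))) : ℤ) =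
      (negCount (Matrix.toLin'
        ((A.submatrix Sum.inr Sum.inr - lam • M.submatrix Sum.inr Sum.inr) -
          (A.submatrix Sum.inr Sum.inl - lam • M.submatrix Sum.inr Sum.inl) *
            (A.submatrix Sum.inl Sum.inl - lam • M.submatrix Sum.inl Sum.inl)⁻¹ *
            (A.submatrix Sum.inl Sum.inr - lam • M.submatrix Sum.inl Sum.inr))) : ℤ)) ∧
    Module.finrank ℝ ↥(LinearMap.ker (Matrix.toLin' (A - lam • M))) =
      Module.finrank ℝ ↥(LinearMap.ker (Matrix.toLin'
        ((A.submatrix Sum.inr Sum.inr - lam • M.submatrix Sum.inr Sum.inr) -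
          (A.submatrix Sum.inr Sum.inl - lam • M.submatrix Sum.inr Sum.inl) *
            (A.submatrix Sum.inl Sum.inl - lam • M.submatrix Sum.inl Sum.inl)⁻¹ *
            (A.submatrix Sum.inl Sum.inr - lam • M.submatrix Sum.inl Sum.inr)))) := by
  classical
  have hAH : A.IsHermitian := by
    rw [Matrix.IsHermitian, conjTranspose_eq_transpose_of_trivial]; exact hA
  set X : Matrix (Fin nI ⊕ Fin nB) (Fin nI ⊕ Fin nB) ℝ := A - lam • M with hXdef
  have hAt : Aᵀ = A := hA
  have hMt : Mᵀ = M := by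
    rw [← conjTranspose_eq_transpose_of_trivial]; exact hM.1.eq
  have hXsymm : Xᵀ = X := by
    rw [hXdef, transpose_sub, transpose_smul, hAt, hMt]
  set X11 := X.submatrix Sum.inl Sum.inl with hX11
  set X12 := X.submatrix Sum.inl Sum.inr with hX12
  set X21 := X.submatrix Sum.inr Sum.inl with hX21
  set X22 := X.submatrix Sum.inr Sum.inr with hX22
  have h11eq : (A.submatrix Sum.inl Sum.inl - lam • M.submatrix Sum.inl Sum.inl) = X11 := by
    ext i j; rfl
  have h12eq : (A.submatrix Sum.inl Sum.inr - lam • M.submatrix Sum.inl Sum.inr) = X12 := by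
    ext i j; rfl
  have h21eq : (A.submatrix Sum.inr Sum.inl - lam • M.submatrix Sum.inr Sum.inl) = X21 := by
    ext i j; rfl
  have h22eq : (A.submatrix Sum.inr Sum.inr - lam • M.submatrix Sum.inr Sum.inr) = X22 := by
    ext i j; rfl
  set Ssch := X22 - X21 * X11⁻¹ * X12 with hSsch
  have hinv' : IsUnit X11 := h11eq ▸ hinv
  have hdet11 : IsUnit X11.det := (Matrix.isUnit_iff_isUnit_det _).1 hinv'
  have hSstmt : (A.submatrix Sum.inr Sum.inr - lam • M.submatrix Sum.inr Sum.inr) -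
      (A.submatrix Sum.inr Sum.inl - lam • M.submatrix Sum.inr Sum.inl) *
        (A.submatrix Sum.inl Sum.inl - lam • M.submatrix Sum.inl Sum.inl)⁻¹ *
        (A.submatrix Sum.inl Sum.inr - lam • M.submatrix Sum.inl Sum.inr) = Ssch := by
    rw [h11eq, h12eq, h21eq, h22eq]
  -- transposes of blocks
  have hX11t : X11ᵀ = X11 := by rw [hX11, transpose_submatrix, hXsymm]
  have hX12t : X12ᵀ = X21 := by rw [hX12, transpose_submatrix, hXsymm]
  have hX11invt : (X11⁻¹)ᵀ = X11⁻¹ := by rw [Matrix.transpose_nonsing_inv, hX11t]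
  have hSscht : Sschᵀ = Ssch := by
    rw [hSsch, transpose_sub, transpose_mul, transpose_mul, hX12t, hX11invt, hX22]
    rw [transpose_submatrix, hXsymm, ← hX22]
    congr 1
    rw [← hX12t, transpose_transpose, Matrix.mul_assoc]
  -- LDU decomposition
  letI iX11 : Invertible X11 := Matrix.invertibleOfIsUnitDet _ hdet11
  have hXblocks : X = fromBlocks X11 X12 X21 X22 := by
    ext (i | i) (j | j) <;> rfl
  have hinvOf : ⅟X11 = X11⁻¹ := invOf_eq_nonsing_inv X11
  have hdecomp := Matrix.fromBlocks_eq_of_invertible₁₁ X11 X12 X21 X22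
  rw [hinvOf] at hdecomp
  set P := fromBlocks (1 : Matrix (Fin nI) (Fin nI) ℝ) (X11⁻¹ * X12) (0 : Matrix (Fin nB) (Fin nI) ℝ) (1 : Matrix (Fin nB) (Fin nB) ℝ) with hP
  set L := fromBlocks (1 : Matrix (Fin nI) (Fin nI) ℝ) (0 : Matrix (Fin nI) (Fin nB) ℝ) (X21 * X11⁻¹) (1 : Matrix (Fin nB) (Fin nB) ℝ) with hL
  set D := fromBlocks X11 (0 : Matrix (Fin nI) (Fin nB) ℝ) (0 : Matrix (Fin nB) (Fin nI) ℝ) (X22 - X21 * X11⁻¹ * X12) with hD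
  have hXLDP : X = L * D * P := by rw [hXblocks]; exact hdecomp
  have hLPt : L = Pᵀ := by
    rw [hP, fromBlocks_transpose, transpose_one, transpose_one, transpose_zero, transpose_mul,
      hX11invt, hX12t, hL]
  have hPdet : IsUnit P.det := by
    rw [hP, Matrix.det_fromBlocks_zero₂₁, det_one, det_one, mul_one]
    exact isUnit_one
  have hLdet : IsUnit L.det := by
    rw [hL, Matrix.det_fromBlocks_zero₁₂, det_one, det_one, mul_one]
    exact isUnit_one
  have hDH : D.IsHermitian := by
    rw [Matrix.IsHermitian, conjTranspose_eq_transpose_of_trivial, hD, fromBlocks_transpose,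
      transpose_zero, transpose_zero, hX11t, ← hSsch, hSscht]
  -- positive definiteness and symmetry of blocks of original pencil
  have hM11 : (M.submatrix Sum.inl Sum.inl).PosDef := posDef_submatrix_inl hM
  have hA11H : (A.submatrix Sum.inl Sum.inl).IsHermitian := by
    rw [Matrix.IsHermitian, conjTranspose_submatrix, hAH.eq]
  -- the two counting identities
  have hN := pencil_count A M hAH hM lam
  have hND := pencil_count (A.submatrix Sum.inl Sum.inl) (M.submatrix Sum.inl Sum.inl)
    hA11H hM11 lam
  -- negCount of X via congruence
  have hnegX : negCount (Matrix.toLin' X)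
      = negCount (Matrix.toLin' X11) + negCount (Matrix.toLin' Ssch) := by
    calc negCount (Matrix.toLin' X) = negCount (Matrix.toLin' (Pᵀ * D * P)) := by
          rw [← hLPt, ← hXLDP]
      _ = negCount (toEuclideanLin (Pᵀ * D * P)) := negCount_toLin'_eq _
      _ = negCount (toEuclideanLin D) := negCount_congr hDH hPdet
      _ = negCount (Matrix.toLin' D) := (negCount_toLin'_eq _).symm
      _ = negCount (Matrix.toLin' X11) + negCount (Matrix.toLin' Ssch) := by
          rw [hD, ← hSsch, negCount_toLin'_fromBlocks]
  have hkerX : finrank ℝ ↥(LinearMap.ker (Matrix.toLin' X))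
      = finrank ℝ ↥(LinearMap.ker (Matrix.toLin' Ssch)) := by
    calc finrank ℝ ↥(LinearMap.ker (Matrix.toLin' X))
        = finrank ℝ ↥(LinearMap.ker (Matrix.toLin' (L * D * P))) := by rw [← hXLDP]
      _ = finrank ℝ ↥(LinearMap.ker (Matrix.toLin' D)) := finrank_ker_mul_mul D hLdet hPdet
      _ = finrank ℝ ↥(LinearMap.ker (Matrix.toLin' X11))
            + finrank ℝ ↥(LinearMap.ker (Matrix.toLin' Ssch)) := by
          rw [hD, ← hSsch, finrank_ker_toLin'_fromBlocks]
      _ = finrank ℝ ↥(LinearMap.ker (Matrix.toLin' Ssch)) := by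
          rw [ker_toLin'_eq_bot hdet11, finrank_bot, zero_add]
  constructor
  · rw [hSstmt]
    have e1 : (∑ᶠ s ∈ Set.Iio lam, ((Module.finrank ℝ
        ↥(LinearMap.ker (Matrix.toLin' (A - s • M))) : ℤ)))
        = ((negCount (Matrix.toLin' X) : ℤ)) := by
      rw [finsum_mem_nat_cast _ hN.1, hN.2]
    have e2 : (∑ᶠ s ∈ Set.Iio lam, ((Module.finrank ℝ
        ↥(LinearMap.ker (Matrix.toLin' (A.submatrix Sum.inl Sum.inl -
          s • M.submatrix Sum.inl Sum.inl))) : ℤ)))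
        = ((negCount (Matrix.toLin' X11) : ℤ)) := by
      rw [finsum_mem_nat_cast _ hND.1, hND.2, h11eq]
    rw [e1, e2, hnegX]
    push_cast
    ring
  · rw [hSstmt]
    exact hkerX

end F8
end

section
/- Let G = (V, E) be a simple graph on vertex set {1,…,n}, let L ⊆ E be a set of leak edges, and let A and M be real symmetric n×n matrices supported on G such that M_{ik} > 0 for every edge {i,k} ∈ E and A_{ik} ≤ 0 for every edge {i,k} ∈ E with {i,k} ∉ L. Let λ > 0 and let S be an edge-leaky forcing set of (G, L). If u ∈ ℝⁿ satisfies Au = λMu and u_i = 0 for all i ∈ S, then u = 0. -/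
/-- Given a simple graph `G` and a set `L` of leak edges, a subset `S` of the
vertices is an edge-leaky forcing set of `(G, L)` if for every `T` with
`S ⊆ T ⊊ V` there is a vertex `v ∈ T` having exactly one neighbour `w`
outside `T`, with the edge `{v,w}` not a leak. -/
def EdgeLeakyForcingSet {V : Type*} (G : SimpleGraph V) (L : Set (Sym2 V))
    (S : Set V) : Prop :=
  ∀ T : Set V, S ⊆ T → T ≠ Set.univ →
    ∃ v ∈ T, ∃ w, G.Adj v w ∧ w ∉ T ∧ s(v, w) ∉ L ∧
      ∀ w', G.Adj v w' → w' ∉ T → w' = w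

/-- the edge-leaky generalization of Proposition 3.3. -/
theorem edge_leaky_unique_continuation {n : ℕ} (G : SimpleGraph (Fin n))
    (L : Set (Sym2 (Fin n))) (hL : L ⊆ G.edgeSet)
    (A M : Matrix (Fin n) (Fin n) ℝ)
    (hAsym : A.IsSymm) (hMsym : M.IsSymm)
    (hAsupp : ∀ i k, i ≠ k → ¬ G.Adj i k → A i k = 0)
    (hMsupp : ∀ i k, i ≠ k → ¬ G.Adj i k → M i k = 0)
    (hMpos : ∀ i k, G.Adj i k → 0 < M i k)
    (hAneg : ∀ i k, G.Adj i k → s(i, k) ∉ L → A i k ≤ 0)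
    (lam : ℝ) (hlam : 0 < lam)
    (S : Set (Fin n)) (hS : EdgeLeakyForcingSet G L S)
    (u : Fin n → ℝ)
    (hu : A.mulVec u = lam • M.mulVec u)
    (huS : ∀ i ∈ S, u i = 0) :
    u = 0 := by
  by_contra hne
  set T : Set (Fin n) := {i | u i = 0} with hTdef
  have hST : S ⊆ T := fun i hi => huS i hi
  have hTne : T ≠ Set.univ := by
    intro h
    apply hne
    funext i
    have : i ∈ T := h ▸ Set.mem_univ i
    exact this
  obtain ⟨v, hv, w, hadj, hw, hnl, huniq⟩ := hS T hST hTne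
  have hsum : ∀ (X : Matrix (Fin n) (Fin n) ℝ),
      (∀ i k, i ≠ k → ¬ G.Adj i k → X i k = 0) →
      X.mulVec u v = X v w * u w := by
    intro X hX
    rw [Matrix.mulVec, dotProduct]
    apply Finset.sum_eq_single
    · intro k _ hk
      by_cases hk0 : u k = 0
      · simp [hk0]
      · have hkT : k ∉ T := hk0
        by_cases hkv : k = v
        · exact absurd (hkv ▸ hv) hkT
        by_cases hadjk : G.Adj v k
        · exact absurd (huniq k hadjk hkT) hk
        · rw [hX v k (Ne.symm hkv) hadjk, zero_mul]
    · intro h; exact absurd (Finset.mem_univ w) h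
  have hA := hsum A hAsupp
  have hM := hsum M hMsupp
  have heq : A v w * u w = lam * (M v w * u w) := by
    have h := congrFun hu v
    rw [Pi.smul_apply, smul_eq_mul, hA, hM] at h
    exact h
  have hfac : (A v w - lam * M v w) * u w = 0 := by ring_nf; linarith [heq]
  have hneg : A v w - lam * M v w < 0 := by
    have h1 := hAneg v w hadj hnl
    have h2 := mul_pos hlam (hMpos v w hadj)
    linarith
  have : u w = 0 := by
    rcases mul_eq_zero.mp hfac with h | h
    · exact absurd h (ne_of_lt hneg)
    · exact h
  exact hw this
end

section
/- Let n, m ≥ 1 and let G be the simple graph on vertex set V = {0,…,n} × {0,…,m} in which distinct vertices p = (p₁,p₂) and q = (q₁,q₂) are adjacent if and only if |p₁ − q₁| ≤ 1 and |p₂ − q₂| ≤ 1. Let L be the set of edges {p,q} of G with p₁ = q₁ or p₂ = q₂ (the horizontal and vertical edges). Then S = { p ∈ V : p₁ = 0 or p₂ = 0 } is an edge-leaky forcing set of (G, L). -/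
/-- The king graph of the `(n+1) × (m+1)` grid: distinct vertices are adjacent
iff both coordinates differ by at most 1. -/
def kingGraph (n m : ℕ) : SimpleGraph (Fin (n + 1) × Fin (m + 1)) where
  Adj p q := p ≠ q ∧ |(p.1 : ℤ) - (q.1 : ℤ)| ≤ 1 ∧ |(p.2 : ℤ) - (q.2 : ℤ)| ≤ 1
  symm := by
    constructor
    rintro p q ⟨h1, h2, h3⟩
    refine ⟨h1.symm, ?_, ?_⟩
    · rwa [abs_sub_comm]
    · rwa [abs_sub_comm]
  loopless := by
    constructor
    rintro p ⟨h1, -⟩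
    exact h1 rfl

/-- the bottom row and left column of the grid form an
edge-leaky forcing set of the king graph when all horizontal and vertical
edges are leaks. -/
theorem grid_edge_leaky_forcing (n m : ℕ) (hn : 1 ≤ n) (hm : 1 ≤ m) :
    EdgeLeakyForcingSet (kingGraph n m)
      {e : Sym2 (Fin (n + 1) × Fin (m + 1)) |
        ∃ p q, e = s(p, q) ∧ (kingGraph n m).Adj p q ∧ (p.1 = q.1 ∨ p.2 = q.2)}
      {p : Fin (n + 1) × Fin (m + 1) | p.1 = 0 ∨ p.2 = 0} := by
  classical
  intro T hST hT
  have hne : ∃ p : Fin (n + 1) × Fin (m + 1), p ∉ T := by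
    by_contra h
    push_neg at h
    exact hT (Set.eq_univ_iff_forall.2 h)
  have hP : ∃ k, ∃ p : Fin (n + 1) × Fin (m + 1),
      p ∉ T ∧ p.1.val + p.2.val = k := by
    obtain ⟨p, hp⟩ := hne
    exact ⟨_, p, hp, rfl⟩
  obtain ⟨⟨a, b⟩, hpT, hpk⟩ := Nat.find_spec hP
  have hmin : ∀ q : Fin (n + 1) × Fin (m + 1), q ∉ T →
      Nat.find hP ≤ q.1.val + q.2.val := fun q hq => Nat.find_le ⟨q, hq, rfl⟩
  simp only at hpk
  have ha1 : 1 ≤ a.val := by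
    rcases Nat.eq_zero_or_pos a.val with h | h
    · exact absurd (hST (Or.inl (Fin.ext h))) hpT
    · exact h
  have hb1 : 1 ≤ b.val := by
    rcases Nat.eq_zero_or_pos b.val with h | h
    · exact absurd (hST (Or.inr (Fin.ext h))) hpT
    · exact h
  set v : Fin (n + 1) × Fin (m + 1) :=
    (⟨a.val - 1, Nat.lt_of_le_of_lt (Nat.sub_le _ _) a.isLt⟩,
     ⟨b.val - 1, Nat.lt_of_le_of_lt (Nat.sub_le _ _) b.isLt⟩) with hv
  have hvT : v ∈ T := by
    by_contra hvn
    have := hmin v hvn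
    simp only [hv] at this
    omega
  refine ⟨v, hvT, (a, b), ⟨?_, ?_, ?_⟩, hpT, ?_, ?_⟩
  · -- v ≠ (a, b)
    intro h
    have : v.1 = a := congrArg Prod.fst h
    have : (v.1 : ℕ) = a.val := congrArg Fin.val this
    simp only [hv] at this
    omega
  · rw [abs_le]
    constructor <;> · simp only [hv] ; omega
  · rw [abs_le]
    constructor <;> · simp only [hv] ; omega
  · -- not a leak
    rintro ⟨p', q', heq, -, hor⟩
    rw [Sym2.eq_iff] at heq
    have hcoords : (p'.1.val = q'.1.val → False) ∧ (p'.2.val = q'.2.val → False) := by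
      rcases heq with ⟨h1, h2⟩ | ⟨h1, h2⟩ <;>
        · subst h1; subst h2; simp only [hv]; constructor <;> intro h <;> omega
    rcases hor with h | h
    · exact hcoords.1 (congrArg Fin.val h)
    · exact hcoords.2 (congrArg Fin.val h)
  · -- uniqueness
    rintro w' ⟨-, h1, h2⟩ hw'
    rw [abs_le] at h1 h2
    have hm' := hmin w' hw'
    simp only [hv] at h1 h2
    have e1 : w'.1.val = a.val := by omega
    have e2 : w'.2.val = b.val := by omega
    exact Prod.ext (Fin.ext e1) (Fin.ext e2)
end

section
/- Let G_hex be the simple graph on vertex set {1,…,13} with the following edges: {1,k} for each k ∈ {2,…,7}; the ring edges {2,3}, {3,4}, {4,5}, {5,6}, {6,7}, {7,2}; and the boundary edges {8,7}, {8,2}, {9,2}, {9,3}, {10,3}, {10,4}, {11,4}, {11,5}, {12,5}, {12,6}, {13,6}, {13,7}. Let B = {8,9,10,11,12,13}. Then B is not a zero forcing set of G_hex, but for every k ∈ {2,…,7}, the set B ∪ {k} is a zero forcing set of G_hex. -/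
/-- The graph of the symmetric hexagon triangulation, with 0-based indices:
centre `0`, inner ring `1,…,6`, boundary `7,…,12` (paper indices shifted down
by one); each boundary node is adjacent to two consecutive inner-ring nodes. -/
def hexGraph : SimpleGraph (Fin 13) :=
  SimpleGraph.fromEdgeSet
    {s(0, 1), s(0, 2), s(0, 3), s(0, 4), s(0, 5), s(0, 6),
     s(1, 2), s(2, 3), s(3, 4), s(4, 5), s(5, 6), s(6, 1),
     s(7, 6), s(7, 1), s(8, 1), s(8, 2), s(9, 2), s(9, 3),
     s(10, 3), s(10, 4), s(11, 4), s(11, 5), s(12, 5), s(12, 6)}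

instance hexDec : DecidableRel hexGraph.Adj := fun a b =>
  decidable_of_iff ((s(a,b) ∈ ({s(0, 1), s(0, 2), s(0, 3), s(0, 4), s(0, 5), s(0, 6),
     s(1, 2), s(2, 3), s(3, 4), s(4, 5), s(5, 6), s(6, 1),
     s(7, 6), s(7, 1), s(8, 1), s(8, 2), s(9, 2), s(9, 3),
     s(10, 3), s(10, 4), s(11, 4), s(11, 5), s(12, 5), s(12, 6)} : Finset (Sym2 (Fin 13)))) ∧ a ≠ b)
    (by simp [hexGraph, SimpleGraph.fromEdgeSet_adj])

/-- a boundary vertex `v` with exactly two neighbours `u,w`, `u` blue, `w` white, forces. -/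
lemma force2 (T : Set (Fin 13)) (v u w : Fin 13) (hv : v ∈ T) (hu : u ∈ T) (hw : w ∉ T)
    (hadj : hexGraph.Adj v w)
    (hnb : ∀ y : Fin 13, hexGraph.Adj v y → y = u ∨ y = w) :
    ∃ v ∈ T, ∃! w, hexGraph.Adj v w ∧ w ∉ T := by
  refine ⟨v, hv, w, ⟨hadj, hw⟩, ?_⟩
  rintro y ⟨ha, hy⟩
  rcases hnb y ha with rfl | rfl
  · exact absurd hu hy
  · rfl

/-- a ring vertex with neighbours `u1..u4` blue and `w` white forces. -/
lemma force5 (T : Set (Fin 13)) (v u1 u2 u3 u4 w : Fin 13) (hv : v ∈ T)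
    (h1 : u1 ∈ T) (h2 : u2 ∈ T) (h3 : u3 ∈ T) (h4 : u4 ∈ T) (hw : w ∉ T)
    (hadj : hexGraph.Adj v w)
    (hnb : ∀ y : Fin 13, hexGraph.Adj v y → y = u1 ∨ y = u2 ∨ y = u3 ∨ y = u4 ∨ y = w) :
    ∃ v ∈ T, ∃! w, hexGraph.Adj v w ∧ w ∉ T := by
  refine ⟨v, hv, w, ⟨hadj, hw⟩, ?_⟩
  rintro y ⟨ha, hy⟩
  rcases hnb y ha with rfl | rfl | rfl | rfl | rfl
  · exact absurd h1 hy
  · exact absurd h2 hy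
  · exact absurd h3 hy
  · exact absurd h4 hy
  · rfl

lemma main (T : Set (Fin 13)) (hB : ∀ b ∈ ({7,8,9,10,11,12} : Set (Fin 13)), b ∈ T)
    (hk : ∃ r ∈ ({1,2,3,4,5,6} : Set (Fin 13)), r ∈ T) (hne : T ≠ Set.univ) :
    ∃ v ∈ T, ∃! w, hexGraph.Adj v w ∧ w ∉ T := by
  have b7 : (7 : Fin 13) ∈ T := hB 7 (by simp)
  have b8 : (8 : Fin 13) ∈ T := hB 8 (by simp)
  have b9 : (9 : Fin 13) ∈ T := hB 9 (by simp)
  have b10 : (10 : Fin 13) ∈ T := hB 10 (by simp)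
  have b11 : (11 : Fin 13) ∈ T := hB 11 (by simp)
  have b12 : (12 : Fin 13) ∈ T := hB 12 (by simp)
  by_cases c1 : (1 : Fin 13) ∈ T <;> by_cases c2 : (2 : Fin 13) ∈ T <;>
    by_cases c3 : (3 : Fin 13) ∈ T <;> by_cases c4 : (4 : Fin 13) ∈ T <;>
    by_cases c5 : (5 : Fin 13) ∈ T <;> by_cases c6 : (6 : Fin 13) ∈ T
  -- all-ring-blue case first
  case pos =>
    have h0 : (0 : Fin 13) ∉ T := by
      intro h0
      apply hne
      apply Set.eq_univ_iff_forall.mpr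
      intro x
      fin_cases x <;> assumption
    exact force5 T 1 2 6 7 8 0 c1 c2 c6 b7 b8 h0 (by decide) (by decide)
  all_goals first
    | exact force2 T 8 1 2 b8 c1 c2 (by decide) (by decide)
    | exact force2 T 8 2 1 b8 c2 c1 (by decide) (by decide)
    | exact force2 T 9 2 3 b9 c2 c3 (by decide) (by decide)
    | exact force2 T 9 3 2 b9 c3 c2 (by decide) (by decide)
    | exact force2 T 10 3 4 b10 c3 c4 (by decide) (by decide)
    | exact force2 T 10 4 3 b10 c4 c3 (by decide) (by decide)
    | exact force2 T 11 4 5 b11 c4 c5 (by decide) (by decide)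
    | exact force2 T 11 5 4 b11 c5 c4 (by decide) (by decide)
    | exact force2 T 12 5 6 b12 c5 c6 (by decide) (by decide)
    | exact force2 T 12 6 5 b12 c6 c5 (by decide) (by decide)
    | exact force2 T 7 6 1 b7 c6 c1 (by decide) (by decide)
    | exact force2 T 7 1 6 b7 c1 c6 (by decide) (by decide)
    | (obtain ⟨r, hr, hrT⟩ := hk
       simp only [Set.mem_insert_iff, Set.mem_singleton_iff] at hr
       rcases hr with rfl | rfl | rfl | rfl | rfl | rfl <;> contradiction)

/-- the boundary of the hexagon mesh is not a zero forcing set,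
but adding any single inner-ring node to it yields a zero forcing set. -/
theorem hexagon_zero_forcing :
    ¬ ZeroForcingSet hexGraph ({7, 8, 9, 10, 11, 12} : Set (Fin 13)) ∧
      ∀ k : Fin 13, 1 ≤ (k : ℕ) → (k : ℕ) ≤ 6 →
        ZeroForcingSet hexGraph (insert k ({7, 8, 9, 10, 11, 12} : Set (Fin 13))) := by
  constructor
  · intro h
    obtain ⟨v, hv, w, ⟨ha, hw⟩, hu⟩ := h {7, 8, 9, 10, 11, 12} (subset_refl _)
      (fun he => by
        have : (0 : Fin 13) ∈ ({7,8,9,10,11,12} : Set (Fin 13)) := he ▸ Set.mem_univ _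
        simp at this)
    simp only [Set.mem_insert_iff, Set.mem_singleton_iff] at hv
    have hns : ∀ x : Fin 13, (x : ℕ) ≤ 6 → x ∉ ({7,8,9,10,11,12} : Set (Fin 13)) := by
      intro x hx
      simp only [Set.mem_insert_iff, Set.mem_singleton_iff]
      rintro (rfl | rfl | rfl | rfl | rfl | rfl) <;> exact absurd hx (by decide)
    rcases hv with rfl | rfl | rfl | rfl | rfl | rfl
    · have e1 := hu 6 ⟨by decide, hns 6 (by decide)⟩
      have e2 := hu 1 ⟨by decide, hns 1 (by decide)⟩
      exact absurd (e1.trans e2.symm) (by decide)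
    · have e1 := hu 1 ⟨by decide, hns 1 (by decide)⟩
      have e2 := hu 2 ⟨by decide, hns 2 (by decide)⟩
      exact absurd (e1.trans e2.symm) (by decide)
    · have e1 := hu 2 ⟨by decide, hns 2 (by decide)⟩
      have e2 := hu 3 ⟨by decide, hns 3 (by decide)⟩
      exact absurd (e1.trans e2.symm) (by decide)
    · have e1 := hu 3 ⟨by decide, hns 3 (by decide)⟩
      have e2 := hu 4 ⟨by decide, hns 4 (by decide)⟩
      exact absurd (e1.trans e2.symm) (by decide)
    · have e1 := hu 4 ⟨by decide, hns 4 (by decide)⟩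
      have e2 := hu 5 ⟨by decide, hns 5 (by decide)⟩
      exact absurd (e1.trans e2.symm) (by decide)
    · have e1 := hu 5 ⟨by decide, hns 5 (by decide)⟩
      have e2 := hu 6 ⟨by decide, hns 6 (by decide)⟩
      exact absurd (e1.trans e2.symm) (by decide)
  · intro k h1 h2 T hsub hne
    apply main T
    · intro b hb
      exact hsub (Set.mem_insert_of_mem _ hb)
    · refine ⟨k, ?_, hsub (Set.mem_insert _ _)⟩
      simp only [Set.mem_insert_iff, Set.mem_singleton_iff]
      simp only [Fin.ext_iff]
      omega
    · exact hne
end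

section
/- Let p, q, r ∈ ℝ² be affinely independent points, and let λ_p and λ_q be the barycentric coordinate functions of the triple (p, q, r): λ_p is the unique affine map ℝ² → ℝ with λ_p(p) = 1 and λ_p(q) = λ_p(r) = 0, and λ_q is the unique affine map with λ_q(q) = 1 and λ_q(p) = λ_q(r) = 0. Let ∇λ_p and ∇λ_q denote their (constant) gradients. Then ⟨∇λ_p, ∇λ_q⟩ = −⟨p − r, q − r⟩ / (4T²), where T is the area of the triangle with vertices p, q, r. In particular, if ⟨p − r, q − r⟩ ≥ 0 (i.e. the interior angle of the triangle at r is at most π/2), then ⟨∇λ_p, ∇λ_q⟩ ≤ 0. -/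
open scoped RealInnerProductSpace
open MeasureTheory Set Pointwise

noncomputable def bgiE0 : EuclideanSpace ℝ (Fin 2) := EuclideanSpace.single 0 1
noncomputable def bgiE1 : EuclideanSpace ℝ (Fin 2) := EuclideanSpace.single 1 1

lemma bgi_vol_T2 : volume {y : ℝ × ℝ | 0 ≤ y.1 ∧ 0 ≤ y.2 ∧ y.1 + y.2 ≤ 1} = ENNReal.ofReal (1/2) := by
  have hT : MeasurableSet {y : ℝ × ℝ | 0 ≤ y.1 ∧ 0 ≤ y.2 ∧ y.1 + y.2 ≤ 1} := by
    apply MeasurableSet.inter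
    · exact measurableSet_le measurable_const measurable_fst
    apply MeasurableSet.inter
    · exact measurableSet_le measurable_const measurable_snd
    · exact measurableSet_le (measurable_fst.add measurable_snd) measurable_const
  rw [Measure.volume_eq_prod, Measure.prod_apply hT]
  have hslice : ∀ a : ℝ, volume (Prod.mk a ⁻¹' {y : ℝ × ℝ | 0 ≤ y.1 ∧ 0 ≤ y.2 ∧ y.1 + y.2 ≤ 1})
      = (Icc (0:ℝ) 1).indicator (fun a => ENNReal.ofReal (1 - a)) a := by
    intro a
    by_cases ha : 0 ≤ a
    · have : Prod.mk a ⁻¹' {y : ℝ × ℝ | 0 ≤ y.1 ∧ 0 ≤ y.2 ∧ y.1 + y.2 ≤ 1} = Icc 0 (1 - a) := by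
        ext b; simp only [mem_preimage, mem_setOf_eq, mem_Icc]
        constructor
        · rintro ⟨_, h2, h3⟩; exact ⟨h2, by linarith⟩
        · rintro ⟨h2, h3⟩; exact ⟨ha, h2, by linarith⟩
      rw [this, Real.volume_Icc]
      by_cases ha1 : a ≤ 1
      · rw [indicator_of_mem (mem_Icc.2 ⟨ha, ha1⟩)]; ring_nf
      · rw [indicator_of_notMem (by simp [mem_Icc, ha1])]
        rw [ENNReal.ofReal_eq_zero.2 (by linarith)]
    · have : Prod.mk a ⁻¹' {y : ℝ × ℝ | 0 ≤ y.1 ∧ 0 ≤ y.2 ∧ y.1 + y.2 ≤ 1} = ∅ := by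
        ext b; simp only [mem_preimage, mem_setOf_eq, mem_empty_iff_false, iff_false]
        rintro ⟨h1, _⟩; exact ha h1
      rw [this, measure_empty, indicator_of_notMem (by simp [mem_Icc, ha])]
  rw [lintegral_congr hslice, lintegral_indicator measurableSet_Icc _]
  rw [← ofReal_integral_eq_lintegral_ofReal]
  · congr 1
    rw [MeasureTheory.integral_Icc_eq_integral_Ioc, ← intervalIntegral.integral_of_le zero_le_one]
    have := intervalIntegral.integral_sub
      ((continuous_const (y := (1:ℝ))).intervalIntegrable (μ := volume) 0 1)
      (continuous_id.intervalIntegrable (μ := volume) 0 1)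
    simp only [id_eq, intervalIntegral.integral_const, smul_eq_mul, integral_id] at this
    rw [this]; norm_num
  · have : IntegrableOn (fun a : ℝ => 1 - a) (Icc 0 1) volume :=
      (continuous_const.sub continuous_id).integrableOn_Icc
    exact this
  · filter_upwards [ae_restrict_mem measurableSet_Icc] with a ha
    simp only [Pi.zero_apply]; linarith [ha.2]

lemma bgi_vol_Tset : volume {x : EuclideanSpace ℝ (Fin 2) | 0 ≤ x 0 ∧ 0 ≤ x 1 ∧ x 0 + x 1 ≤ 1}
    = ENNReal.ofReal (1/2) := by
  have hT2 : MeasurableSet {y : ℝ × ℝ | 0 ≤ y.1 ∧ 0 ≤ y.2 ∧ y.1 + y.2 ≤ 1} := by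
    apply MeasurableSet.inter
    · exact measurableSet_le measurable_const measurable_fst
    apply MeasurableSet.inter
    · exact measurableSet_le measurable_const measurable_snd
    · exact measurableSet_le (measurable_fst.add measurable_snd) measurable_const
  have h1 : {x : EuclideanSpace ℝ (Fin 2) | 0 ≤ x 0 ∧ 0 ≤ x 1 ∧ x 0 + x 1 ≤ 1}
      = ((MeasurableEquiv.toLp 2 (Fin 2 → ℝ)).symm) ⁻¹'
        ((MeasurableEquiv.piFinTwo (fun _ => ℝ)) ⁻¹'
          {y : ℝ × ℝ | 0 ≤ y.1 ∧ 0 ≤ y.2 ∧ y.1 + y.2 ≤ 1}) := rfl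
  rw [h1,
    (EuclideanSpace.volume_preserving_symm_measurableEquiv_toLp (Fin 2)).measure_preimage
      (((volume_preserving_piFinTwo fun _ => ℝ).measurable hT2).nullMeasurableSet),
    (volume_preserving_piFinTwo fun _ => ℝ).measure_preimage hT2.nullMeasurableSet]
  exact bgi_vol_T2

lemma bgi_hull_eq : convexHull ℝ ({0, bgiE0, bgiE1} : Set (EuclideanSpace ℝ (Fin 2)))
    = {x : EuclideanSpace ℝ (Fin 2) | 0 ≤ x 0 ∧ 0 ≤ x 1 ∧ x 0 + x 1 ≤ 1} := by
  apply le_antisymm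
  · apply convexHull_min
    · rintro x (rfl | rfl | rfl)
      · refine ⟨le_refl _, le_refl _, by norm_num⟩
      · exact ⟨by simp [bgiE0, EuclideanSpace.single_apply],
          by simp [bgiE0, EuclideanSpace.single_apply],
          by simp [bgiE0, EuclideanSpace.single_apply]⟩
      · exact ⟨by simp [bgiE1, EuclideanSpace.single_apply],
          by simp [bgiE1, EuclideanSpace.single_apply],
          by simp [bgiE1, EuclideanSpace.single_apply]⟩
    · intro x hx y hy a b ha hb hab
      obtain ⟨hx0, hx1, hx2⟩ := hx
      obtain ⟨hy0, hy1, hy2⟩ := hy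
      refine ⟨?_, ?_, ?_⟩ <;>
        simp only [PiLp.add_apply, PiLp.smul_apply, smul_eq_mul] <;> nlinarith
  · rintro x ⟨hx0, hx1, hx2⟩
    have hx : x = ∑ i : Fin 3, ![1 - x 0 - x 1, x 0, x 1] i •
        ![(0 : EuclideanSpace ℝ (Fin 2)), bgiE0, bgiE1] i := by
      rw [Fin.sum_univ_three]
      apply PiLp.ext
      intro i
      fin_cases i <;>
        simp [bgiE0, bgiE1, PiLp.add_apply, PiLp.smul_apply, EuclideanSpace.single_apply]
    rw [hx]
    apply (convex_convexHull ℝ _).sum_mem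
    · intro i _
      fin_cases i <;> simp <;> linarith
    · rw [Fin.sum_univ_three]; simp; ring
    · intro i _
      fin_cases i <;> exact subset_convexHull ℝ _ (by simp)

noncomputable def bgiL (u v : EuclideanSpace ℝ (Fin 2)) :
    EuclideanSpace ℝ (Fin 2) →ₗ[ℝ] EuclideanSpace ℝ (Fin 2) where
  toFun x := x 0 • u + x 1 • v
  map_add' x y := by
    simp only [PiLp.add_apply, add_smul]; abel
  map_smul' c x := by
    simp only [PiLp.smul_apply, smul_eq_mul, RingHom.id_apply, smul_add, mul_smul]

lemma bgiL_det (u v : EuclideanSpace ℝ (Fin 2)) :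
    LinearMap.det (bgiL u v) = u 0 * v 1 - u 1 * v 0 := by
  rw [← LinearMap.det_toMatrix (PiLp.basisFun 2 ℝ (Fin 2)) (bgiL u v)]
  have : LinearMap.toMatrix (PiLp.basisFun 2 ℝ (Fin 2)) (PiLp.basisFun 2 ℝ (Fin 2)) (bgiL u v)
      = !![u 0, v 0; u 1, v 1] := by
    ext i j
    rw [LinearMap.toMatrix_apply]
    fin_cases i <;> fin_cases j <;>
      simp [bgiL, PiLp.basisFun_apply, PiLp.basisFun_repr, PiLp.add_apply, PiLp.smul_apply,
        EuclideanSpace.single_apply]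
  rw [this, Matrix.det_fin_two_of]; ring

lemma bgi_volume (p q r : EuclideanSpace ℝ (Fin 2)) :
    (volume (convexHull ℝ ({p, q, r} : Set (EuclideanSpace ℝ (Fin 2))))).toReal
      = |(p - r) 0 * (q - r) 1 - (p - r) 1 * (q - r) 0| / 2 := by
  set u := p - r with hu
  set v := q - r with hv
  set L := bgiL u v with hL
  set A : EuclideanSpace ℝ (Fin 2) →ᵃ[ℝ] EuclideanSpace ℝ (Fin 2) :=
    AffineMap.mk' (fun x => L x + r) L 0
      (fun x => by simp only [vsub_eq_sub, vadd_eq_add, sub_zero, map_zero, zero_add]) with hA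
  have hAcoe : ⇑A = fun x => L x + r := rfl
  have himg : A '' ({0, bgiE0, bgiE1} : Set (EuclideanSpace ℝ (Fin 2))) = {p, q, r} := by
    have h0 : A 0 = r := by simp [hAcoe, map_zero]
    have h1 : A bgiE0 = p := by
      have : L bgiE0 = u := by
        show bgiE0 0 • u + bgiE0 1 • v = u
        simp [bgiE0, EuclideanSpace.single_apply]
      simp [hAcoe, this, hu]
    have h2 : A bgiE1 = q := by
      have : L bgiE1 = v := by
        show bgiE1 0 • u + bgiE1 1 • v = v
        simp [bgiE1, EuclideanSpace.single_apply]
      simp [hAcoe, this, hv]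
    rw [Set.image_insert_eq, Set.image_insert_eq, Set.image_singleton, h0, h1, h2]
    ext x; simp; tauto
  have hhull : convexHull ℝ ({p, q, r} : Set (EuclideanSpace ℝ (Fin 2)))
      = A '' (convexHull ℝ ({0, bgiE0, bgiE1} : Set (EuclideanSpace ℝ (Fin 2)))) := by
    rw [A.image_convexHull, himg]
  have hvadd : A '' (convexHull ℝ ({0, bgiE0, bgiE1} : Set (EuclideanSpace ℝ (Fin 2))))
      = r +ᵥ (L '' (convexHull ℝ ({0, bgiE0, bgiE1} : Set (EuclideanSpace ℝ (Fin 2))))) := by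
    rw [hAcoe]
    ext y
    simp only [Set.mem_image, Set.mem_vadd_set]
    constructor
    · rintro ⟨x, hx, rfl⟩; exact ⟨L x, ⟨x, hx, rfl⟩, by simp [vadd_eq_add]; abel⟩
    · rintro ⟨z, ⟨x, hx, rfl⟩, rfl⟩; exact ⟨x, hx, by simp [vadd_eq_add]; abel⟩
  rw [hhull, hvadd, measure_vadd, Measure.addHaar_image_linearMap, bgi_hull_eq, bgi_vol_Tset,
    hL, bgiL_det]
  rw [← ENNReal.ofReal_mul (abs_nonneg _), ENNReal.toReal_ofReal (by positivity)]
  ring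

/-- the gradients of two barycentric coordinate functions of a
triangle with vertices `p, q, r` satisfy
`⟪∇λ_p, ∇λ_q⟫ = -⟪p - r, q - r⟫ / (4T²)`, where `T` is the area of the
triangle; in particular, if the interior angle at `r` is at most `π/2`
(i.e. `⟪p - r, q - r⟫ ≥ 0`), then `⟪∇λ_p, ∇λ_q⟫ ≤ 0`. -/
theorem barycentric_gradient_inner (p q r : EuclideanSpace ℝ (Fin 2))
    (hind : AffineIndependent ℝ ![p, q, r])
    (fp fq : EuclideanSpace ℝ (Fin 2) →ᵃ[ℝ] ℝ)
    (hfpp : fp p = 1) (hfpq : fp q = 0) (hfpr : fp r = 0)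
    (hfqq : fq q = 1) (hfqp : fq p = 0) (hfqr : fq r = 0)
    (gp gq : EuclideanSpace ℝ (Fin 2))
    (hgp : ∀ x, fp x = fp 0 + ⟪gp, x⟫)
    (hgq : ∀ x, fq x = fq 0 + ⟪gq, x⟫) :
    ⟪gp, gq⟫ =
      -⟪p - r, q - r⟫ /
        (4 * (MeasureTheory.volume (convexHull ℝ ({p, q, r} : Set (EuclideanSpace ℝ (Fin 2))))).toReal ^ 2) ∧
    (0 ≤ ⟪p - r, q - r⟫ → ⟪gp, gq⟫ ≤ 0) := by
  set u := p - r with hu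
  set v := q - r with hv
  set d := u 0 * v 1 - u 1 * v 0 with hd
  -- inner product equations
  have inner_coord : ∀ g w : EuclideanSpace ℝ (Fin 2), ⟪g, w⟫ = g 0 * w 0 + g 1 * w 1 := by
    intro g w
    simp [PiLp.inner_apply, Fin.sum_univ_two, RCLike.inner_apply, conj_trivial]
    ring
  have hpu : gp 0 * u 0 + gp 1 * u 1 = 1 := by
    have h1 := hgp p; have h2 := hgp r
    rw [hfpp] at h1; rw [hfpr] at h2
    have : ⟪gp, p⟫ - ⟪gp, r⟫ = 1 := by linarith
    rw [← inner_sub_right] at this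
    rw [← inner_coord, hu]; exact this
  have hpv : gp 0 * v 0 + gp 1 * v 1 = 0 := by
    have h1 := hgp q; have h2 := hgp r
    rw [hfpq] at h1; rw [hfpr] at h2
    have : ⟪gp, q⟫ - ⟪gp, r⟫ = 0 := by linarith
    rw [← inner_sub_right] at this
    rw [← inner_coord, hv]; exact this
  have hqu : gq 0 * u 0 + gq 1 * u 1 = 0 := by
    have h1 := hgq p; have h2 := hgq r
    rw [hfqp] at h1; rw [hfqr] at h2
    have : ⟪gq, p⟫ - ⟪gq, r⟫ = 0 := by linarith
    rw [← inner_sub_right] at this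
    rw [← inner_coord, hu]; exact this
  have hqv : gq 0 * v 0 + gq 1 * v 1 = 1 := by
    have h1 := hgq q; have h2 := hgq r
    rw [hfqq] at h1; rw [hfqr] at h2
    have : ⟪gq, q⟫ - ⟪gq, r⟫ = 1 := by linarith
    rw [← inner_sub_right] at this
    rw [← inner_coord, hv]; exact this
  have e1 : d * gp 0 = v 1 := by linear_combination v 1 * hpu - u 1 * hpv
  have e2 : d * gp 1 = -(v 0) := by linear_combination -(v 0) * hpu + u 0 * hpv
  have e3 : d * gq 0 = -(u 1) := by linear_combination v 1 * hqu - u 1 * hqv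
  have e4 : d * gq 1 = u 0 := by linear_combination -(v 0) * hqu + u 0 * hqv
  have hdmul : d * (gp 0 * gq 1 - gp 1 * gq 0) = 1 := by
    linear_combination gq 1 * e1 - gq 0 * e2 + hqv
  have hdne : d ≠ 0 := by
    intro h; rw [h, zero_mul] at hdmul; exact zero_ne_one hdmul
  have key : d ^ 2 * (gp 0 * gq 0 + gp 1 * gq 1) = -(u 0 * v 0 + u 1 * v 1) := by
    linear_combination (d * gq 0) * e1 + (d * gq 1) * e2 + v 1 * e3 - v 0 * e4
  have hvol4 : 4 * (volume (convexHull ℝ ({p, q, r} :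
      Set (EuclideanSpace ℝ (Fin 2))))).toReal ^ 2 = d ^ 2 := by
    rw [bgi_volume p q r]
    rw [hd, hu, hv]
    rw [div_pow, sq_abs]
    ring
  have main : ⟪gp, gq⟫ = -⟪u, v⟫ / d ^ 2 := by
    rw [inner_coord, inner_coord]
    field_simp
    linear_combination key
  constructor
  · rw [main, hvol4]
  · intro hiuv
    rw [main]
    apply div_nonpos_of_nonpos_of_nonneg
    · linarith
    · positivity
end
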